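/- arXiv:2005.00404 — 7 statements merged into one kernel-verified Lean document; each statement's English description precedes it below -/
import Mathlib

section
/- Let A₁, A₂, H be L*ω formulas and write A⁺ for the formula A·A*. The sequent (A₁⁺·A₂⁺)⁺ → H is derivable in L*ω if and only if for every k ≥ 1 and all n₁, m₁, n₂, m₂, …, n_k, m_k ≥ 1 the sequent A₁^{n₁}, A₂^{m₁}, A₁^{n₂}, A₂^{m₂}, …, A₁^{n_k}, A₂^{m_k} → H is derivable in L*ω. -/
/-- Formulas of the Lambek calculus with iteration L*ω: variables `p n`,
left division `A \ B`, right division `B / A` (written `rdiv B A`),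
product `A · B` and Kleene star `A*`. -/
inductive LFormula : Type
  | var : ℕ → LFormula
  | ldiv : LFormula → LFormula → LFormula   -- ldiv A B  is  A \ B
  | rdiv : LFormula → LFormula → LFormula   -- rdiv B A  is  B / A
  | mul : LFormula → LFormula → LFormula    -- A · B
  | star : LFormula → LFormula              -- A*
  deriving DecidableEq

/-- Derivability in L*ω, as the least set of sequents (`LDer Γ B` means `Γ → B` is
derivable) containing the identity axioms and closed under the rules of the calculus,
including the ω-rule for Kleene star. -/
inductive LDer : List LFormula → LFormula → Prop
  /-- identity axiom A → A -/
  | id (A : LFormula) : LDer [A] A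
  /-- (\→): from Π → A and Γ,B,Δ → C infer Γ,Π,A\B,Δ → C -/
  | ldiv_left (P Γ Δ : List LFormula) (A B C : LFormula) :
      LDer P A → LDer (Γ ++ [B] ++ Δ) C →
      LDer (Γ ++ P ++ [LFormula.ldiv A B] ++ Δ) C
  /-- (→\): from A,Π → B infer Π → A\B -/
  | ldiv_right (P : List LFormula) (A B : LFormula) :
      LDer (A :: P) B → LDer P (LFormula.ldiv A B)
  /-- (/→): from Π → A and Γ,B,Δ → C infer Γ,B/A,Π,Δ → C -/
  | rdiv_left (P Γ Δ : List LFormula) (A B C : LFormula) :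
      LDer P A → LDer (Γ ++ [B] ++ Δ) C →
      LDer (Γ ++ [LFormula.rdiv B A] ++ P ++ Δ) C
  /-- (→/): from Π,A → B infer Π → B/A -/
  | rdiv_right (P : List LFormula) (A B : LFormula) :
      LDer (P ++ [A]) B → LDer P (LFormula.rdiv B A)
  /-- (·→): from Γ,A,B,Δ → C infer Γ,A·B,Δ → C -/
  | mul_left (Γ Δ : List LFormula) (A B C : LFormula) :
      LDer (Γ ++ [A, B] ++ Δ) C → LDer (Γ ++ [LFormula.mul A B] ++ Δ) C
  /-- (→·): from Γ → A and Δ → B infer Γ,Δ → A·B -/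
  | mul_right (Γ Δ : List LFormula) (A B : LFormula) :
      LDer Γ A → LDer Δ B → LDer (Γ ++ Δ) (LFormula.mul A B)
  /-- (*→)_ω: from Γ,Aⁿ,Δ → C for every n ≥ 0 infer Γ,A*,Δ → C -/
  | star_left (Γ Δ : List LFormula) (A C : LFormula) :
      (∀ n : ℕ, LDer (Γ ++ List.replicate n A ++ Δ) C) →
      LDer (Γ ++ [LFormula.star A] ++ Δ) C
  /-- (→*)_n: from Π₁ → A, …, Π_n → A infer Π₁,…,Π_n → A* -/
  | star_right (Ps : List (List LFormula)) (A : LFormula) :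
      (∀ P ∈ Ps, LDer P A) → LDer Ps.flatten (LFormula.star A)

/-- Kleene plus: A⁺ = A · A*. -/
def LFormula.plus (A : LFormula) : LFormula := LFormula.mul A (LFormula.star A)

/-!
The left rules (·→) and (*→)_ω are invertible without cut: by induction on derivations, a
derivable sequent stays derivable when antecedent formulas `A · B` are replaced by `A, B` and
`A*` by `Aⁿ`. Unfolding any set of occurrences at once, rather than a single one, spares every
case analysis of where an unfolded formula sits relative to the last rule. Hence an antecedent
`A⁺` may be traded for all the `Aⁿ⁺¹`, and doing this layer by layer to `(A₁⁺ · A₂⁺)⁺` leaves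
exactly the alternating sequences.
-/

namespace List

variable {α β : Type*} {R : α → β → Prop}

theorem forall₂_append_left_iff {l₁ l₂ : List α} {u : List β} :
    Forall₂ R (l₁ ++ l₂) u ↔ ∃ u₁ u₂, Forall₂ R l₁ u₁ ∧ Forall₂ R l₂ u₂ ∧ u = u₁ ++ u₂ := by
  induction l₁ generalizing u with
  | nil => simp
  | cons a l₁ ih =>
    simp only [cons_append, forall₂_cons_left_iff, ih]
    constructor
    · rintro ⟨b, _, hab, ⟨u₁, u₂, h₁, h₂, rfl⟩, rfl⟩
      exact ⟨b :: u₁, u₂, ⟨b, u₁, hab, h₁, rfl⟩, h₂, rfl⟩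
    · rintro ⟨_, u₂, ⟨b, u₁, hab, h₁, rfl⟩, h₂, rfl⟩
      exact ⟨b, u₁ ++ u₂, hab, ⟨u₁, u₂, h₁, h₂, rfl⟩, rfl⟩

theorem flatten_map_singleton (l : List α) : (l.map fun a => [a]).flatten = l := by
  induction l <;> simp [*]

theorem forall₂_singleton_left_iff {a : α} {u : List β} :
    Forall₂ R [a] u ↔ ∃ b, R a b ∧ u = [b] := by
  simp [forall₂_cons_left_iff]

theorem forall₂_flatten_left_iff {ls : List (List α)} {u : List β} :
    Forall₂ R ls.flatten u ↔ ∃ us, Forall₂ (Forall₂ R) ls us ∧ u = us.flatten := by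
  induction ls generalizing u with
  | nil => simp
  | cons l ls ih =>
    simp only [flatten_cons, forall₂_append_left_iff, ih, forall₂_cons_left_iff]
    constructor
    · rintro ⟨u₁, _, h₁, ⟨us, hs, rfl⟩, rfl⟩
      exact ⟨u₁ :: us, ⟨u₁, us, h₁, hs, rfl⟩, by simp⟩
    · rintro ⟨_, ⟨u₁, us, h₁, hs, rfl⟩, rfl⟩
      exact ⟨u₁, us.flatten, h₁, ⟨us, hs, rfl⟩, by simp⟩

theorem Forall₂.exists_mem_left_of_mem_right {l : List α} {u : List β} {b : β}
    (h : Forall₂ R l u) (hb : b ∈ u) : ∃ a ∈ l, R a b := by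
  induction h with
  | nil => simp at hb
  | cons hab _ ih =>
    rcases mem_cons.mp hb with rfl | hb
    · exact ⟨_, mem_cons_self, hab⟩
    · obtain ⟨a, ha, hab'⟩ := ih hb
      exact ⟨a, mem_cons_of_mem _ ha, hab'⟩

end List

open List LFormula

inductive LeftUnfold : LFormula → List LFormula → Prop
  | refl (A : LFormula) : LeftUnfold A [A]
  | mul (A B : LFormula) : LeftUnfold (mul A B) [A, B]
  | star (A : LFormula) (n : ℕ) : LeftUnfold (star A) (replicate n A)

theorem LeftUnfold.der {A : LFormula} {L : List LFormula} (h : LeftUnfold A L) : LDer L A := by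
  cases h with
  | refl A => exact LDer.id A
  | mul A B => exact LDer.mul_right [A] [B] A B (LDer.id A) (LDer.id B)
  | star A n =>
    rw [← flatten_replicate_singleton]
    exact LDer.star_right _ A fun P hP => (eq_of_mem_replicate hP) ▸ LDer.id A

theorem forall₂_leftUnfold_map_singleton (S : List LFormula) :
    Forall₂ LeftUnfold S (S.map fun A => [A]) :=
  forall₂_map_right_iff.mpr (forall₂_same.mpr fun A _ => LeftUnfold.refl A)

def Unfoldable (S : List LFormula) (C : LFormula) : Prop :=
  ∀ ⦃Ls : List (List LFormula)⦄, Forall₂ LeftUnfold S Ls → LDer Ls.flatten C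

section Unfoldable

variable {Γ Δ P : List LFormula} {A B C : LFormula}

theorem unfoldable_id (A : LFormula) : Unfoldable [A] A := by
  intro Ls hLs
  obtain ⟨L, hL, rfl⟩ := forall₂_singleton_left_iff.mp hLs
  simpa using hL.der

theorem Unfoldable.ldiv_left (hP : Unfoldable P A) (hBC : Unfoldable (Γ ++ [B] ++ Δ) C) :
    Unfoldable (Γ ++ P ++ [ldiv A B] ++ Δ) C := by
  intro Ls hLs
  simp only [forall₂_append_left_iff, forall₂_singleton_left_iff] at hLs
  obtain ⟨_, uΔ, ⟨_, _, ⟨uΓ, uP, hΓ, hP', rfl⟩, ⟨L, hL, rfl⟩, rfl⟩, hΔ, rfl⟩ := hLs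
  cases hL
  have hB := @hBC (uΓ ++ [[B]] ++ uΔ)
    (rel_append (rel_append hΓ (by simp [LeftUnfold.refl])) hΔ)
  simp only [flatten_append, flatten_cons, flatten_nil, append_nil] at hB ⊢
  exact LDer.ldiv_left _ _ _ A B C (hP hP') hB

theorem Unfoldable.ldiv_right (h : Unfoldable (A :: P) B) : Unfoldable P (ldiv A B) :=
  fun _ hLs => LDer.ldiv_right _ A B (h (Forall₂.cons (LeftUnfold.refl A) hLs))

theorem Unfoldable.rdiv_left (hP : Unfoldable P A) (hBC : Unfoldable (Γ ++ [B] ++ Δ) C) :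
    Unfoldable (Γ ++ [rdiv B A] ++ P ++ Δ) C := by
  intro Ls hLs
  simp only [forall₂_append_left_iff, forall₂_singleton_left_iff] at hLs
  obtain ⟨_, uΔ, ⟨_, uP, ⟨uΓ, _, hΓ, ⟨L, hL, rfl⟩, rfl⟩, hP', rfl⟩, hΔ, rfl⟩ := hLs
  cases hL
  have hB := @hBC (uΓ ++ [[B]] ++ uΔ)
    (rel_append (rel_append hΓ (by simp [LeftUnfold.refl])) hΔ)
  simp only [flatten_append, flatten_cons, flatten_nil, append_nil] at hB ⊢
  exact LDer.rdiv_left _ _ _ A B C (hP hP') hB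

theorem Unfoldable.rdiv_right (h : Unfoldable (P ++ [A]) B) : Unfoldable P (rdiv B A) :=
  fun Ls hLs => LDer.rdiv_right _ A B <| by
    simpa using @h (Ls ++ [[A]]) (rel_append hLs (by simp [LeftUnfold.refl]))

theorem Unfoldable.mul_left (h : Unfoldable (Γ ++ [A, B] ++ Δ) C) :
    Unfoldable (Γ ++ [mul A B] ++ Δ) C := by
  intro Ls hLs
  simp only [forall₂_append_left_iff, forall₂_singleton_left_iff] at hLs
  obtain ⟨_, uΔ, ⟨uΓ, _, hΓ, ⟨L, hL, rfl⟩, rfl⟩, hΔ, rfl⟩ := hLs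
  have hAB := @h (uΓ ++ [[A], [B]] ++ uΔ)
    (rel_append (rel_append hΓ (by simp [LeftUnfold.refl])) hΔ)
  simp only [flatten_append, flatten_cons, flatten_nil, append_nil] at hAB ⊢
  cases hL with
  | refl => exact LDer.mul_left _ _ A B C hAB
  | mul => exact hAB

theorem Unfoldable.mul_right (hA : Unfoldable Γ A) (hB : Unfoldable Δ B) :
    Unfoldable (Γ ++ Δ) (mul A B) := by
  intro Ls hLs
  obtain ⟨uΓ, uΔ, hΓ, hΔ, rfl⟩ := forall₂_append_left_iff.mp hLs
  simpa using LDer.mul_right _ _ A B (hA hΓ) (hB hΔ)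

theorem Unfoldable.star_left (h : ∀ n, Unfoldable (Γ ++ replicate n A ++ Δ) C) :
    Unfoldable (Γ ++ [star A] ++ Δ) C := by
  intro Ls hLs
  simp only [forall₂_append_left_iff, forall₂_singleton_left_iff] at hLs
  obtain ⟨_, uΔ, ⟨uΓ, _, hΓ, ⟨L, hL, rfl⟩, rfl⟩, hΔ, rfl⟩ := hLs
  have hAn : ∀ n, LDer (uΓ.flatten ++ replicate n A ++ uΔ.flatten) C := fun n => by
    simpa [flatten_map_singleton] using @h n (uΓ ++ (replicate n A).map (fun A => [A]) ++ uΔ)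
      (rel_append (rel_append hΓ (forall₂_leftUnfold_map_singleton _)) hΔ)
  simp only [flatten_append, flatten_cons, flatten_nil, append_nil]
  cases hL with
  | refl => exact LDer.star_left _ _ A C hAn
  | star _ n => exact hAn n

theorem Unfoldable.star_right {Ps : List (List LFormula)} (h : ∀ P ∈ Ps, Unfoldable P A) :
    Unfoldable Ps.flatten (star A) := by
  intro Ls hLs
  obtain ⟨us, hus, rfl⟩ := forall₂_flatten_left_iff.mp hLs
  rw [flatten_flatten]
  refine LDer.star_right _ A fun _ hmem => ?_
  obtain ⟨u, hu, rfl⟩ := mem_map.mp hmem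
  obtain ⟨P, hP, hPu⟩ := hus.exists_mem_left_of_mem_right hu
  exact h P hP hPu

end Unfoldable

theorem LDer.unfoldable {S : List LFormula} {C : LFormula} (h : LDer S C) : Unfoldable S C := by
  induction h with
  | id A => exact unfoldable_id A
  | ldiv_left _ _ _ _ _ _ _ _ ihP ihBC => exact ihP.ldiv_left ihBC
  | ldiv_right _ _ _ _ ih => exact ih.ldiv_right
  | rdiv_left _ _ _ _ _ _ _ _ ihP ihBC => exact ihP.rdiv_left ihBC
  | rdiv_right _ _ _ _ ih => exact ih.rdiv_right
  | mul_left _ _ _ _ _ _ ih => exact ih.mul_left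
  | mul_right _ _ _ _ _ _ ihA ihB => exact ihA.mul_right ihB
  | star_left _ _ _ _ _ ih => exact Unfoldable.star_left ih
  | star_right _ _ _ ih => exact Unfoldable.star_right ih

theorem LDer.unfold_at {Γ Δ L : List LFormula} {A C : LFormula} (h : LDer (Γ ++ A :: Δ) C)
    (hA : LeftUnfold A L) : LDer (Γ ++ L ++ Δ) C := by
  simpa [flatten_map_singleton] using
    h.unfoldable (rel_append (forall₂_leftUnfold_map_singleton Γ)
      (Forall₂.cons hA (forall₂_leftUnfold_map_singleton Δ)))

section LeftRules

variable {Γ Δ : List LFormula} {A B C : LFormula}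

theorem LDer.mul_left_iff : LDer (Γ ++ mul A B :: Δ) C ↔ LDer (Γ ++ A :: B :: Δ) C :=
  ⟨fun h => by simpa using h.unfold_at (.mul A B),
    fun h => by simpa using LDer.mul_left Γ Δ A B C (by simpa using h)⟩

theorem LDer.star_left_iff : LDer (Γ ++ star A :: Δ) C ↔ ∀ n, LDer (Γ ++ replicate n A ++ Δ) C :=
  ⟨fun h n => h.unfold_at (.star A n), fun h => by simpa using LDer.star_left Γ Δ A C h⟩

theorem LDer.plus_left_iff :
    LDer (Γ ++ A.plus :: Δ) C ↔ ∀ n, LDer (Γ ++ replicate (n + 1) A ++ Δ) C := by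
  rw [plus, mul_left_iff, ← singleton_append, ← append_assoc, star_left_iff]
  simp [replicate_succ]

end LeftRules

def alternation (A₁ A₂ : LFormula) (ps : List (ℕ × ℕ)) : List LFormula :=
  (ps.map fun p => replicate p.1 A₁ ++ replicate p.2 A₂).flatten

section Alternation

variable {A₁ A₂ C : LFormula}

theorem LDer.mul_plus_plus_left_iff {Γ Δ : List LFormula} :
    LDer (Γ ++ mul A₁.plus A₂.plus :: Δ) C ↔
      ∀ n m, LDer (Γ ++ replicate (n + 1) A₁ ++ replicate (m + 1) A₂ ++ Δ) C := by
  rw [mul_left_iff, plus_left_iff]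
  exact forall_congr' fun _ => plus_left_iff

theorem LDer.append_replicate_mul_plus_plus_iff (k : ℕ) {Γ : List LFormula} :
    LDer (Γ ++ replicate k (mul A₁.plus A₂.plus)) C ↔
      ∀ ps : List (ℕ × ℕ), ps.length = k → (∀ p ∈ ps, 1 ≤ p.1 ∧ 1 ≤ p.2) →
        LDer (Γ ++ alternation A₁ A₂ ps) C := by
  induction k generalizing Γ with
  | zero => simp [alternation]
  | succ k ih =>
    rw [replicate_succ, mul_plus_plus_left_iff]
    simp only [ih]
    constructor
    · rintro h (_ | ⟨⟨n, m⟩, ps⟩) hlen hpos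
      · simp at hlen
      obtain ⟨⟨hn, hm⟩, hps⟩ := forall_mem_cons.mp hpos
      obtain ⟨n, rfl⟩ := Nat.exists_eq_add_of_le' hn
      obtain ⟨m, rfl⟩ := Nat.exists_eq_add_of_le' hm
      simpa [alternation] using h n m ps (by simpa using hlen) hps
    · intro h n m ps hlen hpos
      simpa [alternation] using h ((n + 1, m + 1) :: ps) (by simp [hlen])
        (forall_mem_cons.mpr ⟨by simp, hpos⟩)

end Alternation

/-- The sequent (A₁⁺·A₂⁺)⁺ → H is derivable in L*ω iff for every k ≥ 1 and all
n₁,m₁,…,n_k,m_k ≥ 1 the sequent A₁^{n₁},A₂^{m₁},…,A₁^{n_k},A₂^{m_k} → H is derivable. -/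
theorem plus_alternation_iff (A₁ A₂ H : LFormula) :
    LDer [LFormula.plus (LFormula.mul (LFormula.plus A₁) (LFormula.plus A₂))] H ↔
      ∀ ps : List (ℕ × ℕ), ps ≠ [] → (∀ p ∈ ps, 1 ≤ p.1 ∧ 1 ≤ p.2) →
        LDer ((ps.map fun p => List.replicate p.1 A₁ ++ List.replicate p.2 A₂).flatten) H := by
  calc _ ↔ ∀ n, LDer (replicate (n + 1) (mul A₁.plus A₂.plus)) H := by
        simpa using LDer.plus_left_iff (Γ := []) (Δ := [])
    _ ↔ ∀ n, ∀ ps : List (ℕ × ℕ), ps.length = n + 1 → (∀ p ∈ ps, 1 ≤ p.1 ∧ 1 ≤ p.2) →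
        LDer (alternation A₁ A₂ ps) H :=
      forall_congr' fun n => by
        simpa using LDer.append_replicate_mul_plus_plus_iff (n + 1) (Γ := [])
    _ ↔ _ :=
      ⟨fun h ps hne => h _ ps (Nat.succ_pred_eq_of_pos (length_pos_iff.mpr hne)).symm,
        fun h _ ps hlen => h ps (ne_nil_of_length_eq_add_one hlen)⟩
end

section
/- The ω-rule for Kleene star is invertible in L*ω: if the sequent Γ, A*, Δ → C is derivable in L*ω, then for every n ≥ 0 the sequent Γ, A^n, Δ → C is derivable in L*ω. -/
/-!
Induction on the derivation of `Γ, A*, Δ → C`, following the distinguished occurrence of `A*`.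
It is principal only in an identity axiom `A* → A*`, where `Aⁿ → A*` is an instance of `(→*)ₙ`,
or in an application of the ω-rule, whose `n`-th premise is the claim. In every other rule it
lies in the context of exactly one premise, and the induction hypothesis replaces it there.
-/

def ReplaceOne {α : Type*} (x : α) (L Φ Ψ : List α) : Prop :=
  ∃ Γ Δ, Φ = Γ ++ [x] ++ Δ ∧ Ψ = Γ ++ L ++ Δ

namespace ReplaceOne

variable {α : Type*} {x : α} {L X X' Y Y' Ψ : List α}

theorem append_right (h : ReplaceOne x L X X') (Y : List α) :
    ReplaceOne x L (X ++ Y) (X' ++ Y) := by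
  obtain ⟨Γ, Δ, rfl, rfl⟩ := h
  exact ⟨Γ, Δ ++ Y, by simp, by simp⟩

theorem append_left (X : List α) (h : ReplaceOne x L Y Y') :
    ReplaceOne x L (X ++ Y) (X ++ Y') := by
  obtain ⟨Γ, Δ, rfl, rfl⟩ := h
  exact ⟨X ++ Γ, Δ, by simp, by simp⟩

theorem of_append (h : ReplaceOne x L (X ++ Y) Ψ) :
    (∃ X', ReplaceOne x L X X' ∧ Ψ = X' ++ Y) ∨ (∃ Y', ReplaceOne x L Y Y' ∧ Ψ = X ++ Y') := by
  obtain ⟨Γ, Δ, hΦ, rfl⟩ := h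
  rw [List.append_assoc, List.append_eq_append_iff] at hΦ
  rcases hΦ with ⟨Γ₂, rfl, rfl⟩ | ⟨Γ₁, rfl, hY⟩
  · exact .inr ⟨Γ₂ ++ L ++ Δ, ⟨Γ₂, Δ, by simp, rfl⟩, by simp⟩
  · rw [List.singleton_append, List.cons_eq_append_iff] at hY
    rcases hY with ⟨rfl, rfl⟩ | ⟨Δ₁, rfl, rfl⟩
    · exact .inr ⟨L ++ Δ, ⟨[], Δ, by simp, rfl⟩, by simp⟩
    · exact .inl ⟨Γ ++ L ++ Δ₁, ⟨Γ, Δ₁, by simp, rfl⟩, by simp⟩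

theorem of_singleton {y : α} (h : ReplaceOne x L [y] Ψ) : y = x ∧ Ψ = L := by
  obtain ⟨Γ, Δ, hΦ, rfl⟩ := h
  rw [List.append_assoc, List.singleton_eq_append_iff] at hΦ
  rcases hΦ with ⟨rfl, hΔ⟩ | ⟨-, hΔ⟩
  · rw [List.singleton_append, List.cons_eq_cons] at hΔ
    obtain ⟨rfl, rfl⟩ := hΔ
    simp
  · simp at hΔ

theorem of_flatten {Ps : List (List α)} (h : ReplaceOne x L Ps.flatten Ψ) :
    ∃ Ps₁ P P' Ps₂, Ps = Ps₁ ++ P :: Ps₂ ∧ ReplaceOne x L P P' ∧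
      Ψ = (Ps₁ ++ P' :: Ps₂).flatten := by
  induction Ps generalizing Ψ with
  | nil => obtain ⟨Γ, Δ, hΦ, -⟩ := h; simp at hΦ
  | cons P Ps ih =>
    rw [List.flatten_cons] at h
    rcases h.of_append with ⟨P', hP, rfl⟩ | ⟨Ψ', hΨ, rfl⟩
    · exact ⟨[], P, P', Ps, rfl, hP, by simp⟩
    · obtain ⟨Ps₁, Q, Q', Ps₂, rfl, hQ, rfl⟩ := ih hΨ
      exact ⟨P :: Ps₁, Q, Q', Ps₂, rfl, hQ, by simp⟩

end ReplaceOne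

open LFormula

theorem LDer.replicate_star (A : LFormula) (n : ℕ) : LDer (List.replicate n A) (star A) := by
  rw [← List.flatten_replicate_singleton]
  refine LDer.star_right _ A fun P hP => ?_
  rw [List.eq_of_mem_replicate hP]
  exact LDer.id A

theorem LDer.of_replaceOne_star {Φ Ψ : List LFormula} {A C : LFormula} {n : ℕ} (h : LDer Φ C)
    (hr : ReplaceOne (star A) (List.replicate n A) Φ Ψ) : LDer Ψ C := by
  induction h generalizing Ψ with
  | id A₀ =>
    obtain ⟨rfl, rfl⟩ := hr.of_singleton
    exact LDer.replicate_star A n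
  | ldiv_left P Γ Δ A₀ B C hP hB ihP ihB =>
    rcases hr.of_append with ⟨_, h₁, rfl⟩ | ⟨Δ', hΔ, rfl⟩
    · rcases h₁.of_append with ⟨_, h₂, rfl⟩ | ⟨_, hx, rfl⟩
      · rcases h₂.of_append with ⟨Γ', hΓ, rfl⟩ | ⟨P', hP', rfl⟩
        · exact .ldiv_left P Γ' Δ A₀ B C hP (ihB ((hΓ.append_right _).append_right _))
        · exact .ldiv_left P' Γ Δ A₀ B C (ihP hP') hB
      · exact absurd hx.of_singleton.1 (by simp)
    · exact .ldiv_left P Γ Δ' A₀ B C hP (ihB (hΔ.append_left _))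
  | ldiv_right P A₀ B _ ih =>
    exact .ldiv_right _ A₀ B (ih (hr.append_left [A₀]))
  | rdiv_left P Γ Δ A₀ B C hP hB ihP ihB =>
    rcases hr.of_append with ⟨_, h₁, rfl⟩ | ⟨Δ', hΔ, rfl⟩
    · rcases h₁.of_append with ⟨_, h₂, rfl⟩ | ⟨P', hP', rfl⟩
      · rcases h₂.of_append with ⟨Γ', hΓ, rfl⟩ | ⟨_, hx, rfl⟩
        · exact .rdiv_left P Γ' Δ A₀ B C hP (ihB ((hΓ.append_right _).append_right _))
        · exact absurd hx.of_singleton.1 (by simp)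
      · exact .rdiv_left P' Γ Δ A₀ B C (ihP hP') hB
    · exact .rdiv_left P Γ Δ' A₀ B C hP (ihB (hΔ.append_left _))
  | rdiv_right P A₀ B _ ih =>
    exact .rdiv_right _ A₀ B (ih (hr.append_right [A₀]))
  | mul_left Γ Δ A₀ B C _ ih =>
    rcases hr.of_append with ⟨_, h₁, rfl⟩ | ⟨Δ', hΔ, rfl⟩
    · rcases h₁.of_append with ⟨Γ', hΓ, rfl⟩ | ⟨_, hx, rfl⟩
      · exact .mul_left Γ' Δ A₀ B C (ih ((hΓ.append_right _).append_right _))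
      · exact absurd hx.of_singleton.1 (by simp)
    · exact .mul_left Γ Δ' A₀ B C (ih (hΔ.append_left _))
  | mul_right Γ Δ A₀ B hA hB ihA ihB =>
    rcases hr.of_append with ⟨Γ', hΓ, rfl⟩ | ⟨Δ', hΔ, rfl⟩
    · exact .mul_right Γ' Δ A₀ B (ihA hΓ) hB
    · exact .mul_right Γ Δ' A₀ B hA (ihB hΔ)
  | star_left Γ Δ A₀ C hprem ih =>
    rcases hr.of_append with ⟨_, h₁, rfl⟩ | ⟨Δ', hΔ, rfl⟩
    · rcases h₁.of_append with ⟨Γ', hΓ, rfl⟩ | ⟨_, hx, rfl⟩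
      · exact .star_left Γ' Δ A₀ C fun m => ih m ((hΓ.append_right _).append_right _)
      · obtain ⟨hA, rfl⟩ := hx.of_singleton
        cases hA
        exact hprem n
    · exact .star_left Γ Δ' A₀ C fun m => ih m (hΔ.append_left _)
  | star_right Ps A₀ hPs ih =>
    obtain ⟨Ps₁, P, P', Ps₂, rfl, hP, rfl⟩ := hr.of_flatten
    refine .star_right _ A₀ fun Q hQ => ?_
    simp only [List.mem_append, List.mem_cons] at hQ
    rcases hQ with hQ | rfl | hQ
    · exact hPs Q (by simp [hQ])
    · exact ih P (by simp) hP
    · exact hPs Q (by simp [hQ])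

/-- The ω-rule for Kleene star is invertible in L*ω: if Γ, A*, Δ → C is derivable,
then Γ, Aⁿ, Δ → C is derivable for every n ≥ 0. -/
theorem star_left_invertible (Γ Δ : List LFormula) (A C : LFormula)
    (h : LDer (Γ ++ [LFormula.star A] ++ Δ) C) (n : ℕ) :
    LDer (Γ ++ List.replicate n A ++ Δ) C :=
  h.of_replaceOne_star ⟨Γ, Δ, rfl, rfl⟩
end

section
/- Sentinel lemma: let p, q, r be distinct variables, n ≥ 0, and let Φ₀, Φ₁, …, Φ_n be lists of product-free formulas none of whose formulas has top p, q, or r. If the sequent Φ₀, S_{p,q,r}, Φ₁, S_{p,q,r}, …, Φ_{n-1}, S_{p,q,r}, Φ_n → S_{p,q,r} (with exactly n occurrences of S_{p,q,r} interleaved in the antecedent) is derivable in L^Λ(\,/), then n = 1 and every Φ_i is the empty list; that is, the only derivable sequent of this form is S_{p,q,r} → S_{p,q,r}. In particular, neither Λ → S_{p,q,r} nor S_{p,q,r}, S_{p,q,r} → S_{p,q,r} is derivable. -/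
/-- Product-free Lambek formulas: variables `p n`, left division `A \\ B`
(written `ldiv A B`) and right division `B / A` (written `rdiv B A`). -/
inductive PF : Type
  | var : ℕ → PF
  | ldiv : PF → PF → PF   -- ldiv A B  is  A \\ B
  | rdiv : PF → PF → PF   -- rdiv B A  is  B / A
  deriving DecidableEq

/-- Derivability in L^Λ(\\,/), the product-free Lambek calculus allowing empty
antecedents: the least set of sequents (`PDer Γ B` means `Γ → B` is derivable)
containing the identity axioms and closed under the four division rules. -/
inductive PDer : List PF → PF → Prop
  /-- identity axiom A → A -/
  | id (A : PF) : PDer [A] A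
  /-- (\\→): from Π → A and Γ,B,Δ → C infer Γ,Π,A\\B,Δ → C -/
  | ldiv_left (P Γ Δ : List PF) (A B C : PF) :
      PDer P A → PDer (Γ ++ [B] ++ Δ) C →
      PDer (Γ ++ P ++ [PF.ldiv A B] ++ Δ) C
  /-- (→\\): from A,Π → B infer Π → A\\B -/
  | ldiv_right (P : List PF) (A B : PF) :
      PDer (A :: P) B → PDer P (PF.ldiv A B)
  /-- (/→): from Π → A and Γ,B,Δ → C infer Γ,B/A,Π,Δ → C -/
  | rdiv_left (P Γ Δ : List PF) (A B C : PF) :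
      PDer P A → PDer (Γ ++ [B] ++ Δ) C →
      PDer (Γ ++ [PF.rdiv B A] ++ P ++ Δ) C
  /-- (→/): from Π,A → B infer Π → B/A -/
  | rdiv_right (P : List PF) (A B : PF) :
      PDer (P ++ [A]) B → PDer P (PF.rdiv B A)

/-- The top variable of a product-free formula: top(p) = p, top(A\\B) = top(B),
top(B/A) = top(B). -/
def PF.top : PF → ℕ
  | PF.var n => n
  | PF.ldiv _ B => B.top
  | PF.rdiv B _ => B.top

/-- The sentinel formula S_{p,q,r} = (r/(p\\r))/(q/(p\\q)). -/
def sentinel (p q r : ℕ) : PF :=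
  PF.rdiv (PF.rdiv (PF.var r) (PF.ldiv (PF.var p) (PF.var r)))
    (PF.rdiv (PF.var q) (PF.ldiv (PF.var p) (PF.var q)))

/-!
The calculus is sound for interpretations in any quantale, reading `Γ → B` as `∏ Γ ≤ B` and the
divisions as the two residuals. In the quantale of languages over `ℕ` choose the valuation
`p ↦ {0}`, `q ↦ {01, 31}`, `r ↦ {02, 402, 432}`, and every other variable ↦ all words. Then
`S_{p,q,r}` denotes `{4}`, while every formula whose top is not `p`, `q`, `r` denotes all words.
Spelling each sentinel of the antecedent as `4` and each other formula as `5` gives a word of the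
antecedent's language, which must therefore be `4`: the antecedent is the single sentinel.
-/

open Quantale

instance Language.instIsQuantale {α : Type*} : IsQuantale (Language α) where
  mul_sSup_distrib x s := by simp_rw [sSup_eq_iSup, Language.mul_iSup]
  sSup_mul_distrib s y := by simp_rw [sSup_eq_iSup, Language.iSup_mul]

namespace Language

variable {α : Type*} {X Y L : Language α} {w u : List α}

@[simp]
theorem mem_singleton_iff : w ∈ ({u} : Language α) ↔ w = u := Iff.rfl

@[simp]
theorem mem_insert_iff : w ∈ (insert u L : Language α) ↔ w = u ∨ w ∈ L := Iff.rfl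

theorem singleton_le_iff : {w} ≤ L ↔ w ∈ L := Set.singleton_subset_iff

theorem mem_rightMulResiduation : w ∈ X ⇨ᵣ Y ↔ ∀ x ∈ X, x ++ w ∈ Y := by
  rw [← singleton_le_iff, rightMulResiduation_le_iff_mul_le]
  constructor
  · exact fun h x hx => h (append_mem_mul hx rfl)
  · rintro h _ ⟨x, hx, _, rfl, rfl⟩
    exact h x hx

theorem mem_leftMulResiduation : w ∈ X ⇨ₗ Y ↔ ∀ x ∈ X, w ++ x ∈ Y := by
  rw [← singleton_le_iff, leftMulResiduation_le_iff_mul_le]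
  constructor
  · exact fun h x hx => h (append_mem_mul rfl hx)
  · rintro h _ ⟨_, rfl, x, hx, rfl⟩
    exact h x hx

theorem map_mem_prod_map {β : Type*} {I : β → Language α} {f : β → α} {l : List β}
    (h : ∀ b ∈ l, [f b] ∈ I b) : l.map f ∈ (l.map I).prod := by
  induction l with
  | nil => exact nil_mem_one
  | cons b l ih =>
    exact append_mem_mul (h b List.mem_cons_self) (ih fun c hc => h c (List.mem_cons_of_mem b hc))

end Language

namespace List

variable {α : Type*}

theorem mem_intercalate {sep : List α} {L : List (List α)} {a : α}
    (h : a ∈ sep.intercalate L) : a ∈ sep ∨ ∃ l ∈ L, a ∈ l := by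
  induction L with
  | nil => simp at h
  | cons l L ih =>
    cases L with
    | nil => exact .inr ⟨l, mem_cons_self, by simpa using h⟩
    | cons l' L =>
      rw [intercalate_cons_cons, mem_append, mem_append] at h
      rcases h with (h | h) | h
      · exact .inr ⟨l, mem_cons_self, h⟩
      · exact .inl h
      · rcases ih h with h | ⟨m, hm, h⟩
        · exact .inl h
        · exact .inr ⟨m, mem_cons_of_mem l hm, h⟩

theorem eq_nil_nil_of_intercalate_eq_singleton [DecidableEq α] {x : α} {L : List (List α)}
    (hx : ∀ l ∈ L, x ∉ l) (h : [x].intercalate L = [x]) : L = [[], []] := by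
  have hL : L ≠ [] := by
    rintro rfl
    simp at h
  rw [← splitOn_intercalate x hx hL, h]
  simp [splitOn_cons_eq_if_modifyHead]

end List

namespace PF

variable {M : Type*} [Monoid M] [CompleteLattice M] [IsQuantale M]

def interp (v : ℕ → M) : PF → M
  | var n => v n
  | ldiv A B => interp v A ⇨ᵣ interp v B
  | rdiv B A => interp v A ⇨ₗ interp v B

theorem interp_eq_top {v : ℕ → M} {A : PF} (h : v A.top = ⊤) : A.interp v = ⊤ := by
  induction A with
  | var n => exact h
  | ldiv A B _ ihB =>
    exact top_unique (rightMulResiduation_le_iff_mul_le.mpr (by rw [ihB h]; exact le_top))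
  | rdiv B A ihB _ =>
    exact top_unique (leftMulResiduation_le_iff_mul_le.mpr (by rw [ihB h]; exact le_top))

end PF

theorem PDer.prod_le_interp {M : Type*} [Monoid M] [CompleteLattice M] [IsQuantale M]
    (v : ℕ → M) {Γ : List PF} {B : PF} (h : PDer Γ B) :
    (Γ.map (PF.interp v)).prod ≤ B.interp v := by
  induction h with
  | id A => simp
  | ldiv_left P Γ Δ A B C _ _ ihP ihB =>
    have hB : (P.map (PF.interp v)).prod * (A.ldiv B).interp v ≤ B.interp v := by
      grw [ihP]
      exact rightMulResiduation_le_iff_mul_le.mp le_rfl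
    simp only [List.map_append, List.prod_append, List.map_cons, List.map_nil, List.prod_cons,
      List.prod_nil, mul_one] at ihB ⊢
    calc _ = (Γ.map (PF.interp v)).prod * ((P.map (PF.interp v)).prod * (A.ldiv B).interp v) *
          (Δ.map (PF.interp v)).prod := by rw [mul_assoc (Γ.map _).prod]
      _ ≤ C.interp v := by grw [hB]; exact ihB
  | ldiv_right P A B _ ih =>
    exact rightMulResiduation_le_iff_mul_le.mpr (by simpa using ih)
  | rdiv_left P Γ Δ A B C _ _ ihP ihB =>
    have hB : (B.rdiv A).interp v * (P.map (PF.interp v)).prod ≤ B.interp v := by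
      grw [ihP]
      exact leftMulResiduation_le_iff_mul_le.mp le_rfl
    simp only [List.map_append, List.prod_append, List.map_cons, List.map_nil, List.prod_cons,
      List.prod_nil, mul_one] at ihB ⊢
    calc _ = (Γ.map (PF.interp v)).prod * ((B.rdiv A).interp v * (P.map (PF.interp v)).prod) *
          (Δ.map (PF.interp v)).prod := by rw [mul_assoc (Γ.map _).prod]
      _ ≤ C.interp v := by grw [hB]; exact ihB
  | rdiv_right P A B _ ih =>
    exact leftMulResiduation_le_iff_mul_le.mpr (by simpa using ih)

def sentinelValuation (p q r : ℕ) (t : ℕ) : Language ℕ :=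
  if t = p then {[0]}
  else if t = q then {[0, 1], [3, 1]}
  else if t = r then {[0, 2], [4, 0, 2], [4, 3, 2]}
  else ⊤

theorem sentinelValuation_eq_top {p q r t : ℕ} (hp : t ≠ p) (hq : t ≠ q) (hr : t ≠ r) :
    sentinelValuation p q r t = ⊤ := by
  simp [sentinelValuation, hp, hq, hr]

-- `p\q = {1}`, `p\r = {2}`, `q/(p\q) = {0, 3}`, `r/(p\r) = {0, 40, 43}`, and `4` is the only
-- word that both `0` and `3` extend into the last language.
theorem interp_sentinel_sentinelValuation {p q r : ℕ} (hpq : p ≠ q) (hpr : p ≠ r) (hqr : q ≠ r) :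
    (sentinel p q r).interp (sentinelValuation p q r) = {[4]} := by
  ext w
  simp +contextual [sentinel, PF.interp, sentinelValuation, hpq.symm, hpr.symm, hqr.symm,
    Language.mem_leftMulResiduation, Language.mem_rightMulResiduation,
    List.append_eq_cons_iff, List.cons_eq_append_iff]

theorem PDer.eq_singleton_sentinel {p q r : ℕ} (hpq : p ≠ q) (hpr : p ≠ r) (hqr : q ≠ r)
    {Γ : List PF} (hΓ : ∀ A ∈ Γ, A = sentinel p q r ∨ A.top ≠ p ∧ A.top ≠ q ∧ A.top ≠ r)
    (h : PDer Γ (sentinel p q r)) : Γ = [sentinel p q r] := by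
  set S := sentinel p q r
  set v := sentinelValuation p q r
  have hS : S.interp v = {[4]} := interp_sentinel_sentinelValuation hpq hpr hqr
  let letter : PF → ℕ := fun A => if A = S then 4 else 5
  have hword : Γ.map letter ∈ (Γ.map (PF.interp v)).prod := by
    refine Language.map_mem_prod_map fun A hA => ?_
    rcases hΓ A hA with hAS | ⟨hp, hq, hr⟩
    · simp [letter, hAS, hS]
    · rw [PF.interp_eq_top (sentinelValuation_eq_top hp hq hr)]
      trivial
  have hletters : Γ.map letter = [4] := by
    have := h.prod_le_interp v hword
    rwa [hS] at this
  obtain ⟨A, rfl, hA⟩ := List.map_eq_singleton_iff.mp hletters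
  simpa [letter] using hA

/-- Sentinel lemma: if p, q, r are distinct, none of the formulas in Φ₀,…,Φ_n has
top p, q or r, and the sequent Φ₀, S_{p,q,r}, Φ₁, S_{p,q,r}, …, Φ_{n-1}, S_{p,q,r}, Φ_n →
S_{p,q,r} (with exactly n interleaved occurrences of the sentinel) is derivable in
L^Λ(\\,/), then n = 1 and every Φ_i is empty; i.e. the only derivable sequent of this
form is S_{p,q,r} → S_{p,q,r}. -/
theorem sentinel_lemma (p q r : ℕ) (hpq : p ≠ q) (hpr : p ≠ r) (hqr : q ≠ r)
    (n : ℕ) (Φs : List (List PF)) (hlen : Φs.length = n + 1)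
    (htop : ∀ Φ ∈ Φs, ∀ A ∈ Φ, A.top ≠ p ∧ A.top ≠ q ∧ A.top ≠ r)
    (h : PDer (List.intercalate [sentinel p q r] Φs) (sentinel p q r)) :
    n = 1 ∧ ∀ Φ ∈ Φs, Φ = ([] : List PF) := by
  have hΓ : [sentinel p q r].intercalate Φs = [sentinel p q r] := by
    refine h.eq_singleton_sentinel hpq hpr hqr fun A hA => ?_
    rcases List.mem_intercalate hA with hAS | ⟨Φ, hΦ, hAΦ⟩
    · exact .inl (List.mem_singleton.mp hAS)
    · exact .inr (htop Φ hΦ A hAΦ)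
  have hΦs : Φs = [[], []] :=
    List.eq_nil_nil_of_intercalate_eq_singleton (fun Φ hΦ hS => (htop Φ hΦ _ hS).2.2 rfl) hΓ
  subst hΦs
  simp at hlen ⊢
  omega
end

section
/- In the is(U) construction, the sequent A_i → is(U) is derivable in L^Λ(\,/) for every i = 1, …, n. -/
/-- Whether the variable m occurs in a product-free formula. -/
def PF.occurs (m : ℕ) : PF → Prop
  | PF.var n => m = n
  | PF.ldiv A B => A.occurs m ∨ B.occurs m
  | PF.rdiv B A => B.occurs m ∨ A.occurs m

/-- Curried right divisions: `curryR q [Y₁,…,Y_m]` is the formula q/Y_m/⋯/Y₁. -/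
def curryR (q : PF) (Δ : List PF) : PF := Δ.foldr (fun Y acc => PF.rdiv acc Y) q

/-- Curried left divisions: `curryL [X₁,…,X_n] q` is the formula X_n\\⋯\\X₁\\q. -/
def curryL (Γ : List PF) (q : PF) : PF := Γ.foldl (fun acc X => PF.ldiv X acc) q

/-- The list E = S,A₁,S,A₂,S,…,S,A_n,S. -/
def Elist (S : PF) (As : List PF) : List PF := S :: (As.map fun A => [A, S]).flatten

/-- The list B = E,(((u/F)\\u)\\S). -/
def Blist (S : PF) (As : List PF) (u : ℕ) (F : PF) : List PF :=
  Elist S As ++ [PF.ldiv (PF.ldiv (PF.rdiv (PF.var u) F) (PF.var u)) S]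

/-- The list C = (S/(u/(G\\u))),E. -/
def Clist (S : PF) (As : List PF) (u : ℕ) (G : PF) : List PF :=
  PF.rdiv S (PF.rdiv (PF.var u) (PF.ldiv G (PF.var u))) :: Elist S As

/-- The formula is(U) = (s/E, B)\\s/C (in curried notation), where S = S_{t,v,w}. -/
def isU (As : List PF) (u t v w s : ℕ) (F G : PF) : PF :=
  curryL (curryR (PF.var s) (Elist (sentinel t v w) As) ::
      Blist (sentinel t v w) As u F)
    (curryR (PF.var s) (Clist (sentinel t v w) As u G))

namespace PDer

theorem curryL_right {Γ P : List PF} {q : PF} (h : PDer (Γ ++ P) q) : PDer P (curryL Γ q) := by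
  induction Γ generalizing q with
  | nil => simpa [curryL] using h
  | cons X Γ ih => exact ih (ldiv_right _ X q (by simpa using h))

theorem curryR_right {P Δ : List PF} {q : PF} (h : PDer (P ++ Δ) q) : PDer P (curryR q Δ) := by
  induction Δ generalizing P with
  | nil => simpa [curryR] using h
  | cons Y Δ ih => exact rdiv_right P Y _ (ih (by simpa using h))

theorem curryR_left {Ps : List (List PF)} {Δ : List PF} (hΔ : List.Forall₂ PDer Ps Δ)
    {Γ Θ : List PF} {q C : PF} (h : PDer (Γ ++ [q] ++ Θ) C) :
    PDer (Γ ++ [curryR q Δ] ++ Ps.flatten ++ Θ) C := by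
  induction hΔ with
  | nil => simpa [curryR] using h
  | @cons P Y Ps Δ hPY _ ih =>
    simpa [curryR] using rdiv_left P Γ (Ps.flatten ++ Θ) Y (curryR q Δ) C hPY (by simpa using ih)

theorem ldiv_apply {P : List PF} {A B : PF} (h : PDer P A) : PDer (P ++ [PF.ldiv A B]) B := by
  simpa using ldiv_left P [] [] A B B h (id B)

theorem rdiv_apply {P : List PF} {A B : PF} (h : PDer P A) : PDer (PF.rdiv B A :: P) B := by
  simpa using rdiv_left P [] [] A B B h (id B)

theorem ldiv_raise {P : List PF} {F : PF} (C : PF) (h : PDer P F) :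
    PDer P (PF.ldiv (PF.rdiv C F) C) :=
  ldiv_right P _ C (rdiv_apply h)

theorem rdiv_raise {P : List PF} {G : PF} (C : PF) (h : PDer P G) :
    PDer P (PF.rdiv C (PF.ldiv G C)) :=
  rdiv_right P _ C (ldiv_apply h)

end PDer

theorem Elist_append_cons (S A : PF) (P Q : List PF) :
    Elist S (P ++ A :: Q) =
      (P.map fun B => [S, B]).flatten ++ [S, A, S] ++ (Q.map fun B => [B, S]).flatten := by
  induction P with
  | nil => simp [Elist]
  | cons B P ih => simp_all [Elist]

theorem List.flatten_map_singleton_s8 {α : Type*} (l : List α) : (l.map fun a => [a]).flatten = l := by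
  simpa [List.flatMap_def] using l.flatMap_singleton'

theorem PDer.forall₂_map_singleton (l : List PF) : List.Forall₂ PDer (l.map fun B => [B]) l :=
  List.forall₂_map_left_iff.mpr (List.forall₂_same.mpr fun B _ => PDer.id B)

theorem PDer.curryR_Elist_sandwich {S A D C : PF} (q : PF) (P Q : List PF)
    (hD : PDer (Elist S (A :: Q) ++ [D]) S) (hC : PDer (C :: Elist S (P ++ [A])) S) :
    PDer ([curryR q (Elist S (P ++ A :: Q))] ++ Elist S (P ++ A :: Q) ++ [D] ++ [A] ++ [C] ++
      Elist S (P ++ A :: Q)) q := by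
  set gP := (P.map fun B => [S, B]).flatten
  set fQ := (Q.map fun B => [B, S]).flatten
  have chunks : List.Forall₂ PDer
      ((gP.map fun B => [B]) ++ [Elist S (A :: Q) ++ [D], [A], C :: Elist S (P ++ [A])] ++
        (fQ.map fun B => [B]))
      (gP ++ [S, A, S] ++ fQ) :=
    List.rel_append (List.rel_append (PDer.forall₂_map_singleton gP)
      (.cons hD (.cons (.id A) (.cons hC .nil)))) (PDer.forall₂_map_singleton fQ)
  have hE_cons : Elist S (A :: Q) = [S, A, S] ++ fQ := by simpa using Elist_append_cons S A [] Q
  have hE_snoc : Elist S (P ++ [A]) = gP ++ [S, A, S] := by simpa using Elist_append_cons S A P []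
  rw [hE_cons, hE_snoc] at chunks
  simpa [Elist_append_cons, List.flatten_map_singleton_s8] using
    curryR_left chunks (Γ := []) (Θ := []) (id q)

theorem isU_forward_general
    (As : List PF)
    (u t v w s : ℕ)
    (F G : PF)
    (hF : ∀ i < As.length, PDer (Elist (sentinel t v w) (As.drop i)) F)
    (hG : ∀ i < As.length, PDer (Elist (sentinel t v w) (As.take (i + 1))) G)
    (A : PF) (hA : A ∈ As) :
    PDer [A] (isU As u t v w s F G) := by
  obtain ⟨P, Q, rfl⟩ := List.append_of_mem hA
  have hF' : PDer (Elist (sentinel t v w) (A :: Q)) F := by simpa using hF P.length (by simp)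
  have hG' : PDer (Elist (sentinel t v w) (P ++ [A])) G := by
    simpa [List.take_append, List.take_of_length_le] using hG P.length (by simp)
  refine PDer.curryL_right (PDer.curryR_right ?_)
  simpa [Blist, Clist] using PDer.curryR_Elist_sandwich (PF.var s) P Q
    (PDer.ldiv_apply (hF'.ldiv_raise (PF.var u))) (PDer.rdiv_apply (hG'.rdiv_raise (PF.var u)))

/-- In the is(U) construction, the sequent A_i → is(U) is derivable in L^Λ(\\,/)
for each member A_i of U. -/
theorem isU_forward
    (As : List PF) (hAs : As ≠ [])
    (u t v w s : ℕ) (hvars : ([u, t, v, w, s] : List ℕ).Nodup)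
    (hfresh : ∀ A ∈ As, ∀ m ∈ ([u, t, v, w, s] : List ℕ), ¬ A.occurs m)
    (F G : PF)
    (hF : ∀ i < As.length, PDer (Elist (sentinel t v w) (As.drop i)) F)
    (hG : ∀ i < As.length, PDer (Elist (sentinel t v w) (As.take (i + 1))) G)
    (A : PF) (hA : A ∈ As) :
    PDer [A] (isU As u t v w s F G) :=
  isU_forward_general As u t v w s F G hF hG A hA
end

section
/- In the is(U) construction, let Π be a nonempty list of product-free formulas none of whose formulas has top s, t, v, or w, and suppose the sequent Π → is(U) is derivable in L^Λ(\,/). Then there exist an index j ∈ {1,…,n}, a suffix B₂ of the list B, and a prefix C₁ of the list C such that the sequent B₂, Π, C₁ → A_j is derivable in L^Λ(\,/). -/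
/-!
Inverting the right rules turns `Π → is(U)` into `s/E, B, Π, C → s`. No formula of `B, Π, C` has
top `s`, so `s/E` is the head formula of the derivation and `B, Π, C` splits into consecutive
blocks deriving `S, A₁, S, …, A_n, S`. A block deriving the sentinel `S = (w/(t\w))/(v/(t\v))`
in such a context is `S` itself, ends with a formula `_\S`, or starts with a formula `S/_`; but in
`B, Π, C` the only such formulas are the last one of `B` and the first one of `C`. Hence no
sentinel block meets `Π`, and the nonempty `Π` lies inside a single block `B₂, Π, C₁` deriving
some `A_j`.
-/

theorem PF.top_ne_of_not_occurs {A : PF} {m : ℕ} (h : ¬ A.occurs m) : A.top ≠ m := by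
  intro hm
  subst hm
  induction A with
  | var n => exact h rfl
  | ldiv _ _ _ ih => exact ih fun h' => h (.inr h')
  | rdiv _ _ ih _ => exact ih fun h' => h (.inl h')

theorem List.append_cons_eq_append {α : Type*} {X Y P R : List α} {b : α}
    (h : X ++ b :: Y = P ++ R) :
    (∃ P₂, P = X ++ b :: P₂ ∧ Y = P₂ ++ R) ∨ ∃ R₁, R = R₁ ++ b :: Y ∧ X = P ++ R₁ := by
  rcases List.append_eq_append_iff.mp h with ⟨a, hP, hbY⟩ | ⟨c, hX, hR⟩
  · rcases List.cons_eq_append_iff.mp hbY with ⟨rfl, rfl⟩ | ⟨a', rfl, rfl⟩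
    · exact .inr ⟨[], by simp, by simpa using hP.symm⟩
    · exact .inl ⟨a', hP, rfl⟩
  · exact .inr ⟨c, hR, hX⟩

theorem List.append_cons_eq_append_cons {α : Type*} {X Y U V : List α} {a b : α}
    (h : X ++ a :: Y = U ++ b :: V) :
    (∃ M, U = X ++ a :: M ∧ Y = M ++ b :: V) ∨ (X = U ∧ a = b ∧ Y = V) ∨
      ∃ M, X = U ++ b :: M ∧ V = M ++ a :: Y := by
  rcases List.append_cons_eq_append h with hU | ⟨R₁, hR, rfl⟩
  · exact .inl hU
  · rcases List.cons_eq_append_iff.mp hR with ⟨rfl, hb⟩ | ⟨M, rfl, rfl⟩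
    · obtain ⟨rfl, rfl⟩ := List.cons_eq_cons.mp hb
      exact .inr (.inl ⟨by simp, rfl, rfl⟩)
    · exact .inr (.inr ⟨M, rfl, rfl⟩)

namespace PDer

theorem ldiv_right_inv {Γ : List PF} {A B : PF} (h : PDer Γ (.ldiv A B)) : PDer (A :: Γ) B := by
  generalize hC : PF.ldiv A B = C at h
  induction h with
  | id => subst hC; simpa using ldiv_left [A] [] [] A B B (id A) (id B)
  | ldiv_left P Γ Δ A' B' _ hP _ _ ih =>
    simpa using ldiv_left P (A :: Γ) Δ A' B' B hP (by simpa using ih hC)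
  | rdiv_left P Γ Δ A' B' _ hP _ _ ih =>
    simpa using rdiv_left P (A :: Γ) Δ A' B' B hP (by simpa using ih hC)
  | ldiv_right => cases hC; assumption
  | rdiv_right => cases hC

theorem rdiv_right_inv {Γ : List PF} {A B : PF} (h : PDer Γ (.rdiv B A)) :
    PDer (Γ ++ [A]) B := by
  generalize hC : PF.rdiv B A = C at h
  induction h with
  | id => subst hC; simpa using rdiv_left [A] [] [] A B B (id A) (id B)
  | ldiv_left P Γ Δ A' B' _ hP _ _ ih =>
    simpa using ldiv_left P Γ (Δ ++ [A]) A' B' B hP (by simpa using ih hC)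
  | rdiv_left P Γ Δ A' B' _ hP _ _ ih =>
    simpa using rdiv_left P Γ (Δ ++ [A]) A' B' B hP (by simpa using ih hC)
  | ldiv_right => cases hC
  | rdiv_right => cases hC; assumption

theorem of_curryL {Γ Θ : List PF} {q : PF} (h : PDer Θ (curryL Γ q)) : PDer (Γ ++ Θ) q := by
  induction Γ using List.reverseRecOn generalizing Θ with
  | nil => simpa [curryL] using h
  | append_singleton Γ X ih =>
    have h' : PDer Θ (.ldiv X (curryL Γ q)) := by simpa [curryL] using h
    simpa using ih h'.ldiv_right_inv

theorem of_curryR {Δ Θ : List PF} {q : PF} (h : PDer Θ (curryR q Δ)) : PDer (Θ ++ Δ) q := by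
  induction Δ generalizing Θ with
  | nil => simpa [curryR] using h
  | cons Y Δ ih => simpa using ih (Θ := Θ ++ [Y]) (rdiv_right_inv h)

end PDer

/-- `Spine f Γ Δ x`: a derivation of `Γ, f, Δ → x` in which every left rule decomposes `f`,
each argument of `f` being derived from a block of `Γ` or `Δ`. -/
inductive Spine : PF → List PF → List PF → ℕ → Prop
  | var (x : ℕ) : Spine (.var x) [] [] x
  | ldiv {A B : PF} {Γ Δ P : List PF} {x : ℕ} :
      PDer P A → Spine B Γ Δ x → Spine (.ldiv A B) (Γ ++ P) Δ x
  | rdiv {A B : PF} {Γ Δ P : List PF} {x : ℕ} :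
      PDer P A → Spine B Γ Δ x → Spine (.rdiv B A) Γ (P ++ Δ) x

namespace Spine

variable {f : PF} {Γ Δ : List PF} {x : ℕ}

theorem top_eq (h : Spine f Γ Δ x) : f.top = x := by
  induction h with
  | var => rfl
  | ldiv _ _ ih => exact ih
  | rdiv _ _ ih => exact ih

theorem var_inv {y : ℕ} (h : Spine (.var y) Γ Δ x) : Γ = [] ∧ Δ = [] := by
  cases h; exact ⟨rfl, rfl⟩

theorem ldiv_inv {A B : PF} (h : Spine (.ldiv A B) Γ Δ x) :
    ∃ Γ' P, Γ = Γ' ++ P ∧ PDer P A ∧ Spine B Γ' Δ x := by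
  cases h; exact ⟨_, _, rfl, ‹_›, ‹_›⟩

theorem rdiv_inv {A B : PF} (h : Spine (.rdiv B A) Γ Δ x) :
    ∃ P Δ', Δ = P ++ Δ' ∧ PDer P A ∧ Spine B Γ Δ' x := by
  cases h; exact ⟨_, _, rfl, ‹_›, ‹_›⟩

theorem curryR_inv {Ys : List PF} {y : ℕ} (h : Spine (curryR (.var y) Ys) Γ Δ x) :
    Γ = [] ∧ ∃ Ps : List (List PF), List.Forall₂ PDer Ps Ys ∧ Δ = Ps.flatten := by
  induction Ys generalizing Δ with
  | nil =>
    obtain ⟨rfl, rfl⟩ := var_inv h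
    exact ⟨rfl, [], .nil, rfl⟩
  | cons Y Ys ih =>
    obtain ⟨P, Δ', rfl, hP, h⟩ := rdiv_inv h
    obtain ⟨rfl, Ps, hPs, rfl⟩ := ih h
    exact ⟨rfl, P :: Ps, .cons hP hPs, rfl⟩

theorem subst_right {b : PF} {Z : List PF}
    (hsub : ∀ X Y D, PDer (X ++ b :: Y) D → PDer (X ++ Z ++ Y) D) (h : Spine f Γ Δ x)
    {X Y : List PF} (hΔ : Δ = X ++ b :: Y) :
    Spine f Γ (X ++ Z ++ Y) x := by
  induction h generalizing X Y with
  | var => simp at hΔ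
  | ldiv hP _ ih => exact .ldiv hP (ih hΔ)
  | @rdiv A B Γ Δ P x hP hB ih =>
    rcases List.append_cons_eq_append hΔ.symm with ⟨P₂, rfl, rfl⟩ | ⟨R₁, rfl, rfl⟩
    · simpa using Spine.rdiv (hsub X P₂ A hP) hB
    · simpa using Spine.rdiv hP (ih rfl)

theorem subst_left {b : PF} {Z : List PF}
    (hsub : ∀ X Y D, PDer (X ++ b :: Y) D → PDer (X ++ Z ++ Y) D) (h : Spine f Γ Δ x)
    {X Y : List PF} (hΓ : Γ = X ++ b :: Y) :
    Spine f (X ++ Z ++ Y) Δ x := by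
  induction h generalizing X Y with
  | var => simp at hΓ
  | rdiv hP _ ih => exact .rdiv hP (ih hΓ)
  | @ldiv A B Γ Δ P x hP hB ih =>
    rcases List.append_cons_eq_append hΓ.symm with ⟨P₂, rfl, rfl⟩ | ⟨R₁, rfl, rfl⟩
    · simpa using Spine.ldiv hP (ih rfl)
    · simpa using Spine.ldiv (hsub R₁ Y A hP) hB

theorem subst_or_eq {b : PF} {Z : List PF}
    (hsub : ∀ X Y D, PDer (X ++ b :: Y) D → PDer (X ++ Z ++ Y) D) (h : Spine f Γ Δ x)
    {X Y : List PF} (heq : Γ ++ f :: Δ = X ++ b :: Y) :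
    (∃ Γ' Δ', X ++ Z ++ Y = Γ' ++ f :: Δ' ∧ Spine f Γ' Δ' x) ∨ (Γ = X ∧ f = b ∧ Δ = Y) := by
  rcases List.append_cons_eq_append_cons heq with ⟨M, rfl, rfl⟩ | heq | ⟨M, rfl, rfl⟩
  · exact .inl ⟨Γ, M ++ Z ++ Y, by simp, h.subst_right hsub rfl⟩
  · exact .inr heq
  · exact .inl ⟨X ++ Z ++ M, Δ, by simp, h.subst_left hsub rfl⟩

end Spine

namespace PDer

theorem exists_spine {Γ : List PF} {x : ℕ} (h : PDer Γ (.var x)) :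
    ∃ Γ₁ f Γ₂, Γ = Γ₁ ++ f :: Γ₂ ∧ Spine f Γ₁ Γ₂ x := by
  generalize hC : PF.var x = C at h
  induction h with
  | id => subst hC; exact ⟨[], _, [], rfl, .var x⟩
  | ldiv_left P Γ Δ A B _ hP _ _ ih =>
    obtain ⟨Γ₁, f, Γ₂, heq, hf⟩ := ih hC
    have hsub : ∀ X Y D, PDer (X ++ B :: Y) D → PDer (X ++ (P ++ [.ldiv A B]) ++ Y) D :=
      fun X Y D hD => by simpa using ldiv_left P X Y A B D hP (by simpa using hD)
    rcases hf.subst_or_eq hsub (by simpa using heq.symm) with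
      ⟨Γ', Δ', heq', hf'⟩ | ⟨rfl, rfl, rfl⟩
    · exact ⟨Γ', f, Δ', by simpa using heq', hf'⟩
    · exact ⟨Γ₁ ++ P, _, Γ₂, by simp, .ldiv hP hf⟩
  | rdiv_left P Γ Δ A B _ hP _ _ ih =>
    obtain ⟨Γ₁, f, Γ₂, heq, hf⟩ := ih hC
    have hsub : ∀ X Y D, PDer (X ++ B :: Y) D → PDer (X ++ (.rdiv B A :: P) ++ Y) D :=
      fun X Y D hD => by simpa using rdiv_left P X Y A B D hP (by simpa using hD)
    rcases hf.subst_or_eq hsub (by simpa using heq.symm) with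
      ⟨Γ', Δ', heq', hf'⟩ | ⟨rfl, rfl, rfl⟩
    · exact ⟨Γ', f, Δ', by simpa using heq', hf'⟩
    · exact ⟨Γ₁, _, P ++ Γ₂, by simp, .rdiv hP hf⟩
  | ldiv_right | rdiv_right => cases hC

theorem exists_top_eq {Γ : List PF} {x : ℕ} (h : PDer Γ (.var x)) : ∃ f ∈ Γ, f.top = x := by
  obtain ⟨Γ₁, f, Γ₂, rfl, hf⟩ := h.exists_spine
  exact ⟨f, by simp, hf.top_eq⟩

theorem exists_forall₂_of_curryR {Ys Γ : List PF} {x : ℕ}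
    (h : PDer (curryR (.var x) Ys :: Γ) (.var x)) (hΓ : ∀ g ∈ Γ, g.top ≠ x) :
    ∃ Ps : List (List PF), List.Forall₂ PDer Ps Ys ∧ Γ = Ps.flatten := by
  obtain ⟨_ | ⟨g, Γ₁⟩, f, Γ₂, heq, hf⟩ := h.exists_spine
  · obtain ⟨rfl, rfl⟩ := List.cons_eq_cons.mp heq
    exact hf.curryR_inv.2
  · obtain ⟨-, rfl⟩ := List.cons_eq_cons.mp heq
    exact absurd hf.top_eq (hΓ f (by simp))

end PDer

abbrev typeRaise (t v : ℕ) : PF := .rdiv (.var v) (.ldiv (.var t) (.var v))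

section Sentinel

variable {t v w : ℕ}

theorem Spine.sentinel_inv {Γ Δ : List PF} {x : ℕ} (h : Spine (sentinel t v w) Γ Δ x) :
    Γ = [] ∧ ∃ P R, Δ = P ++ R ∧ PDer P (typeRaise t v) := by
  obtain ⟨P, Δ', rfl, hP, h⟩ := h.rdiv_inv
  obtain ⟨_, _, rfl, -, h⟩ := h.rdiv_inv
  exact ⟨h.var_inv.1, P, _, rfl, hP⟩

/-- After inverting `→/`, the only other candidate head `t\v` would need a formula with top `t`. -/
theorem PDer.exists_eq_typeRaise_cons {P : List PF} (ht : ∀ g ∈ P, g.top ≠ t)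
    (hv : ∀ g ∈ P, g.top = v → g = typeRaise t v) (h : PDer P (typeRaise t v)) :
    ∃ P', P = typeRaise t v :: P' := by
  obtain ⟨Γ₁, f, Γ₂, heq, hf⟩ := h.rdiv_right_inv.exists_spine
  rcases List.append_cons_eq_append heq.symm with ⟨P', rfl, -⟩ | ⟨R₁, hR, rfl⟩
  · obtain rfl := hv f (by simp) hf.top_eq
    obtain ⟨_, _, -, -, hvar⟩ := hf.rdiv_inv
    rw [hvar.var_inv.1]
    exact ⟨P', rfl⟩
  · obtain ⟨rfl, rfl, rfl⟩ : R₁ = [] ∧ f = .ldiv (.var t) (.var v) ∧ Γ₂ = [] := by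
      simpa [List.append_eq_singleton_iff] using hR.symm
    obtain ⟨Γ', P₀, hΓ, hP₀, -⟩ := hf.ldiv_inv
    obtain ⟨g, hg, hgt⟩ := hP₀.exists_top_eq
    exact absurd hgt (ht g (by simp_all))

theorem eq_nil_of_sentinel_args (htv : t ≠ v) (htw : t ≠ w) (hvw : v ≠ w) {Q P R : List PF}
    (hQ : ∀ f ∈ Q, f.top ≠ t ∧ f.top ≠ v)
    (heq : Q ++ [typeRaise t v, .ldiv (.var t) (.var w)] = P ++ R)
    (hP : PDer P (typeRaise t v)) : Q = [] := by
  have hPmem : ∀ g ∈ P, g ∈ Q ∨ g = typeRaise t v ∨ g = .ldiv (.var t) (.var w) := fun g hg => by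
    simpa [← heq] using List.mem_append_left R hg
  obtain ⟨P', rfl⟩ := hP.exists_eq_typeRaise_cons
    (fun g hg => by rcases hPmem g hg with h | rfl | rfl <;> simp_all [PF.top, eq_comm])
    (fun g hg => by rcases hPmem g hg with h | rfl | rfl <;> simp_all [PF.top, hvw.symm])
  rcases Q with _ | ⟨q, Q⟩
  · rfl
  · obtain rfl := (List.cons_eq_cons.mp heq).1
    exact absurd rfl (hQ _ List.mem_cons_self).2

def SentinelSegment (S : PF) (Q : List PF) : Prop :=
  Q = [S] ∨ (∃ Q' A, Q = Q' ++ [.ldiv A S]) ∨ ∃ A Q', Q = .rdiv S A :: Q'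

theorem sentinelSegment_of_pder (htv : t ≠ v) (htw : t ≠ w) (hvw : v ≠ w) {Q : List PF}
    (htops : ∀ f ∈ Q, f.top ≠ t ∧ f.top ≠ v)
    (hw : ∀ f ∈ Q, f.top = w → f = sentinel t v w ∨ (∃ A, f = .ldiv A (sentinel t v w)) ∨
      ∃ A, f = .rdiv (sentinel t v w) A)
    (h : PDer Q (sentinel t v w)) : SentinelSegment (sentinel t v w) Q := by
  have h' : PDer (Q ++ [typeRaise t v, .ldiv (.var t) (.var w)]) (.var w) := by
    simpa using h.rdiv_right_inv.rdiv_right_inv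
  obtain ⟨Γ₁, f, Γ₂, heq, hf⟩ := h'.exists_spine
  rcases List.append_cons_eq_append heq.symm with ⟨Q₂, rfl, rfl⟩ | ⟨R₁, hR, rfl⟩
  · have hQ₂ : ∀ f ∈ Q₂, f.top ≠ t ∧ f.top ≠ v := fun g hg => htops g (by simp [hg])
    rcases hw f (by simp) hf.top_eq with rfl | ⟨A, rfl⟩ | ⟨A, rfl⟩
    · obtain ⟨rfl, P, R, heq, hP⟩ := hf.sentinel_inv
      obtain rfl := eq_nil_of_sentinel_args htv htw hvw hQ₂ heq hP
      exact .inl rfl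
    · obtain ⟨Γ', P₀, rfl, -, hS⟩ := hf.ldiv_inv
      obtain ⟨-, P, R, heq, hP⟩ := hS.sentinel_inv
      obtain rfl := eq_nil_of_sentinel_args htv htw hvw hQ₂ heq hP
      exact .inr (.inl ⟨Γ' ++ P₀, A, rfl⟩)
    · obtain ⟨_, _, -, -, hS⟩ := hf.rdiv_inv
      obtain rfl := hS.sentinel_inv.1
      exact .inr (.inr ⟨A, Q₂, rfl⟩)
  · -- the head is `v/(t\v)`, of the wrong top, or `t\w`, whose argument needs top `t`
    rcases List.cons_eq_append_iff.mp hR with ⟨rfl, hf'⟩ | ⟨R₁', rfl, hR'⟩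
    · obtain ⟨rfl, -⟩ := List.cons_eq_cons.mp hf'
      exact absurd hf.top_eq hvw
    · obtain ⟨rfl, rfl, rfl⟩ : R₁' = [] ∧ f = .ldiv (.var t) (.var w) ∧ Γ₂ = [] := by
        simpa [List.append_eq_singleton_iff] using hR'.symm
      obtain ⟨Γ', P₀, hΓ, hP₀, -⟩ := hf.ldiv_inv
      obtain ⟨g, hg, hgt⟩ := hP₀.exists_top_eq
      have hg' : g ∈ Q ∨ g = typeRaise t v := by
        simpa [← hΓ] using List.mem_append_right Γ' hg
      rcases hg' with hg' | rfl
      · exact absurd hgt (htops g hg').1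
      · exact absurd hgt.symm htv

end Sentinel

namespace SentinelSegment

variable {S : PF} {Q : List PF}

theorem ne_nil (h : SentinelSegment S Q) : Q ≠ [] := by
  rcases h with rfl | ⟨Q', A, rfl⟩ | ⟨A, Q', rfl⟩ <;> simp

/-- A sentinel block at the front of `X, Θ, C` cannot reach into `Θ`: its first formula would
have to lie in `Θ` and its last one in `Θ, C`. -/
theorem prefix_of_append_eq {R X Θ C : List PF} (hQ : SentinelSegment S Q)
    (h : Q ++ R = X ++ Θ ++ C) (hΘ : Θ ≠ []) (hΘS : ∀ f ∈ Θ, f.top ≠ S.top)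
    (hX : ∀ f ∈ X, ∀ A, f ≠ .rdiv S A) (hC : ∀ f ∈ C, ∀ A, f ≠ .ldiv A S) : Q <+: X := by
  rw [List.append_assoc, List.append_eq_append_iff] at h
  rcases h with ⟨a, rfl, -⟩ | ⟨_ | ⟨d, D⟩, rfl, hD⟩
  · exact List.prefix_append _ _
  · simp
  exfalso
  obtain ⟨θ, Θ', rfl⟩ := List.exists_cons_of_ne_nil hΘ
  obtain ⟨rfl, hD⟩ := List.cons_eq_cons.mp hD
  rcases hQ with hQ | ⟨Q', A, hQ⟩ | ⟨A, Q', hQ⟩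
  · obtain ⟨rfl, rfl, -⟩ : X = [] ∧ θ = S ∧ D = [] := by
      simpa [List.append_eq_singleton_iff] using hQ
    exact hΘS _ List.mem_cons_self rfl
  · have hA : PF.ldiv A S ∈ θ :: D := by
      rcases List.append_cons_eq_append hQ with ⟨P₂, -, rfl⟩ | ⟨R₁, hR₁, -⟩
      · simp
      · obtain ⟨-, rfl, -⟩ : R₁ = [] ∧ θ = .ldiv A S ∧ D = [] := by
          simpa [List.append_eq_singleton_iff] using hR₁.symm
        exact List.mem_cons_self
    replace hA : PF.ldiv A S ∈ θ :: Θ' ++ C := by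
      simpa [List.cons_append, hD] using List.mem_append_left R hA
    rcases List.mem_append.mp hA with hA | hA
    · exact hΘS _ hA rfl
    · exact hC _ hA A rfl
  · rcases X with _ | ⟨x, X⟩
    · obtain ⟨rfl, -⟩ := List.cons_eq_cons.mp hQ
      exact hΘS _ List.mem_cons_self rfl
    · obtain ⟨rfl, -⟩ := List.cons_eq_cons.mp hQ
      exact hX _ List.mem_cons_self A rfl

end SentinelSegment

theorem Elist_nil (S : PF) : Elist S [] = [S] := rfl

theorem Elist_cons (S A : PF) (As : List PF) : Elist S (A :: As) = S :: A :: Elist S As := rfl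

theorem mem_Elist {S f : PF} {As : List PF} (h : f ∈ Elist S As) : f = S ∨ f ∈ As := by
  induction As with
  | nil => simpa [Elist_nil] using h
  | cons A As ih =>
    rw [Elist_cons] at h
    rcases h with _ | ⟨_, _ | ⟨_, h⟩⟩
    · exact .inl rfl
    · exact .inr List.mem_cons_self
    · exact (ih h).imp_right (List.mem_cons_of_mem A)

section Blocks

variable {S : PF} {B Θ C : List PF}

theorem exists_cons_of_forall₂_Elist
    (hseg : ∀ Q ⊆ B ++ Θ ++ C, PDer Q S → SentinelSegment S Q) (hΘS : ∀ f ∈ Θ, f.top ≠ S.top)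
    (hB : ∀ f ∈ B, ∀ A, f ≠ .rdiv S A) (hC : ∀ f ∈ C, ∀ A, f ≠ .ldiv A S)
    {As X Θ' : List PF} {Ps : List (List PF)} (hX : X ⊆ B) (hΘ' : Θ' ⊆ Θ) (hΘ'ne : Θ' ≠ [])
    (hPs : List.Forall₂ PDer Ps (Elist S As)) (hflat : Ps.flatten = X ++ Θ' ++ C) :
    ∃ Q Ps' X', Ps = Q :: Ps' ∧ Q ≠ [] ∧ X = Q ++ X' ∧
      List.Forall₂ PDer Ps' (Elist S As).tail := by
  obtain ⟨Q, Ps', hQ, hPs', rfl⟩ : ∃ Q Ps', PDer Q S ∧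
      List.Forall₂ PDer Ps' (Elist S As).tail ∧ Ps = Q :: Ps' := by
    rcases hPs with _ | ⟨hQ, hPs'⟩
    exact ⟨_, _, hQ, hPs', rfl⟩
  have h0 : Q ++ Ps'.flatten = X ++ Θ' ++ C := by simpa using hflat
  have hQ : SentinelSegment S Q := hseg Q (fun f hf => by
    have : f ∈ X ++ Θ' ++ C := h0 ▸ List.mem_append_left _ hf
    simp only [List.mem_append] at this ⊢
    exact this.imp (Or.imp (@hX f) (@hΘ' f)) id) hQ
  obtain ⟨X', rfl⟩ := hQ.prefix_of_append_eq h0 hΘ'ne (fun f hf => hΘS f (hΘ' hf))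
    (fun f hf => hB f (hX hf)) hC
  exact ⟨Q, Ps', X', rfl, hQ.ne_nil, rfl, hPs'⟩

theorem exists_pder_of_forall₂_Elist
    (hseg : ∀ Q ⊆ B ++ Θ ++ C, PDer Q S → SentinelSegment S Q)
    (hΘ : Θ ≠ []) (hΘS : ∀ f ∈ Θ, f.top ≠ S.top)
    (hB : ∀ f ∈ B, ∀ A, f ≠ .rdiv S A) (hC : ∀ f ∈ C, ∀ A, f ≠ .ldiv A S)
    {As X : List PF} {Ps : List (List PF)} (hX : X <:+ B)
    (hPs : List.Forall₂ PDer Ps (Elist S As)) (hflat : Ps.flatten = X ++ Θ ++ C) :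
    ∃ Aj ∈ As, ∃ B₂ C₁ : List PF, B₂ <:+ B ∧ C₁ <+: C ∧ PDer (B₂ ++ Θ ++ C₁) Aj := by
  induction As generalizing X Ps with
  | nil =>
    obtain ⟨Q, Ps, X', rfl, -, rfl, hPs⟩ := exists_cons_of_forall₂_Elist hseg hΘS hB hC
      hX.subset (List.Subset.refl _) hΘ hPs hflat
    obtain rfl : Ps = [] := by cases hPs; rfl
    simp only [List.flatten_cons, List.flatten_nil, List.append_nil, List.append_assoc,
      List.self_eq_append_right, List.append_eq_nil_iff] at hflat
    exact absurd hflat.2.1 hΘ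
  | cons A As ih =>
    obtain ⟨Q, Ps, X', rfl, -, rfl, hPs⟩ := exists_cons_of_forall₂_Elist hseg hΘS hB hC
      hX.subset (List.Subset.refl _) hΘ hPs hflat
    have hX' : X' <:+ B := (List.suffix_append Q X').trans hX
    obtain ⟨QA, Ps', hQA, hPs', rfl⟩ : ∃ QA Ps', PDer QA A ∧
        List.Forall₂ PDer Ps' (Elist S As) ∧ Ps = QA :: Ps' := by
      rcases hPs with _ | ⟨hQA, hPs'⟩
      exact ⟨_, _, hQA, hPs', rfl⟩
    have h0 : QA ++ Ps'.flatten = X' ++ (Θ ++ C) := by simpa using hflat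
    rcases List.append_eq_append_iff.mp h0 with ⟨X'', rfl, hrest⟩ | ⟨M, rfl, hM⟩
    · obtain ⟨Aj, hAj, hres⟩ := ih ((List.suffix_append QA X'').trans hX') hPs'
        (by simpa using hrest)
      exact ⟨Aj, List.mem_cons_of_mem A hAj, hres⟩
    rcases List.append_eq_append_iff.mp hM with ⟨C₁, rfl, rfl⟩ | ⟨_ | ⟨θ, Θ₂⟩, rfl, hrest⟩
    · exact ⟨A, List.mem_cons_self, X', C₁, hX', List.prefix_append _ _, by simpa using hQA⟩
    · exact ⟨A, List.mem_cons_self, X', [], hX', List.nil_prefix, by simpa using hQA⟩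
    -- a nonempty rest of `Θ` would start the next sentinel block
    obtain ⟨Q', _, _, -, hQ', hnil, -⟩ := exists_cons_of_forall₂_Elist (X := []) hseg hΘS hB hC
      (List.nil_subset _) (List.subset_append_right _ _) (List.cons_ne_nil θ Θ₂) hPs'
      (by simpa using hrest)
    exact absurd (List.append_eq_nil_iff.mp hnil.symm).1 hQ'

end Blocks

theorem mem_Blist {S f : PF} {As : List PF} {u : ℕ} {F : PF} (h : f ∈ Blist S As u F) :
    f = S ∨ f ∈ As ∨ ∃ A, f = .ldiv A S := by
  rcases List.mem_append.mp h with h | h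
  · exact (mem_Elist h).imp_right .inl
  · exact .inr (.inr ⟨_, List.mem_singleton.mp h⟩)

theorem mem_Clist {S f : PF} {As : List PF} {u : ℕ} {G : PF} (h : f ∈ Clist S As u G) :
    f = S ∨ f ∈ As ∨ ∃ A, f = .rdiv S A := by
  rcases List.mem_cons.mp h with h | h
  · exact .inr (.inr ⟨_, h⟩)
  · exact (mem_Elist h).imp_right .inl

theorem ne_rdiv_of_mem_Blist {t v w u : ℕ} {As : List PF} {F f : PF}
    (hAs : ∀ A ∈ As, A.top ≠ w) (hf : f ∈ Blist (sentinel t v w) As u F) (A : PF) :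
    f ≠ .rdiv (sentinel t v w) A := by
  rcases mem_Blist hf with rfl | hf | ⟨A', rfl⟩
  · simp [sentinel]
  · exact fun hA => hAs f hf (hA ▸ rfl)
  · simp

theorem ne_ldiv_of_mem_Clist {t v w u : ℕ} {As : List PF} {G f : PF}
    (hAs : ∀ A ∈ As, A.top ≠ w) (hf : f ∈ Clist (sentinel t v w) As u G) (A : PF) :
    f ≠ .ldiv A (sentinel t v w) := by
  rcases mem_Clist hf with rfl | hf | ⟨A', rfl⟩
  · simp [sentinel]
  · exact fun hA => hAs f hf (hA ▸ rfl)
  · simp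

theorem top_of_mem_isU_context {As Θ : List PF} {u t v w s : ℕ} {F G f : PF}
    (hAs : ∀ A ∈ As, A.top ≠ s ∧ A.top ≠ t ∧ A.top ≠ v ∧ A.top ≠ w)
    (hΘ : ∀ A ∈ Θ, A.top ≠ s ∧ A.top ≠ t ∧ A.top ≠ v ∧ A.top ≠ w)
    (hf : f ∈ Blist (sentinel t v w) As u F ++ Θ ++ Clist (sentinel t v w) As u G) :
    (f.top ≠ s ∧ f.top ≠ t ∧ f.top ≠ v ∧ f.top ≠ w) ∨
      (f.top = w ∧ (f = sentinel t v w ∨ (∃ A, f = .ldiv A (sentinel t v w)) ∨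
        ∃ A, f = .rdiv (sentinel t v w) A)) := by
  rcases List.mem_append.mp hf with hf | hf
  · rcases List.mem_append.mp hf with hf | hf
    · rcases mem_Blist hf with rfl | hf | ⟨A, rfl⟩
      · exact .inr ⟨rfl, .inl rfl⟩
      · exact .inl (hAs f hf)
      · exact .inr ⟨rfl, .inr (.inl ⟨A, rfl⟩)⟩
    · exact .inl (hΘ f hf)
  · rcases mem_Clist hf with rfl | hf | ⟨A, rfl⟩
    · exact .inr ⟨rfl, .inl rfl⟩
    · exact .inl (hAs f hf)
    · exact .inr ⟨rfl, .inr (.inr ⟨A, rfl⟩)⟩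

theorem sentinelSegment_of_subset_isU_context {As Θ Q : List PF} {u t v w s : ℕ} {F G : PF}
    (htv : t ≠ v) (htw : t ≠ w) (hvw : v ≠ w)
    (hAs : ∀ A ∈ As, A.top ≠ s ∧ A.top ≠ t ∧ A.top ≠ v ∧ A.top ≠ w)
    (hΘ : ∀ A ∈ Θ, A.top ≠ s ∧ A.top ≠ t ∧ A.top ≠ v ∧ A.top ≠ w)
    (hQ : Q ⊆ Blist (sentinel t v w) As u F ++ Θ ++ Clist (sentinel t v w) As u G)
    (h : PDer Q (sentinel t v w)) : SentinelSegment (sentinel t v w) Q := by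
  refine sentinelSegment_of_pder htv htw hvw (fun f hf => ?_) (fun f hf hfw => ?_) h
  · rcases top_of_mem_isU_context hAs hΘ (hQ hf) with hf | ⟨hf, -⟩
    · exact ⟨hf.2.1, hf.2.2.1⟩
    · exact hf ▸ ⟨htw.symm, hvw.symm⟩
  · rcases top_of_mem_isU_context hAs hΘ (hQ hf) with hf | ⟨-, hf⟩
    · exact absurd hfw hf.2.2.2
    · exact hf

theorem isU_backward_general
    (As : List PF)
    (u t v w s : ℕ) (hvars : ([u, t, v, w, s] : List ℕ).Nodup)
    (hfresh : ∀ A ∈ As, ∀ m ∈ ([u, t, v, w, s] : List ℕ), ¬ A.occurs m)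
    (F G : PF)
    (Pi : List PF) (hPi : Pi ≠ [])
    (htop : ∀ A ∈ Pi, A.top ≠ s ∧ A.top ≠ t ∧ A.top ≠ v ∧ A.top ≠ w)
    (h : PDer Pi (isU As u t v w s F G)) :
    ∃ Aj ∈ As, ∃ B₂ C₁ : List PF,
      B₂ <:+ Blist (sentinel t v w) As u F ∧
      C₁ <+: Clist (sentinel t v w) As u G ∧
      PDer (B₂ ++ Pi ++ C₁) Aj := by
  obtain ⟨htv, htw, hvw, hws⟩ : t ≠ v ∧ t ≠ w ∧ v ≠ w ∧ w ≠ s := by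
    simp only [List.nodup_cons, List.mem_cons, List.not_mem_nil, or_false, not_or] at hvars
    omega
  have hAtop : ∀ A ∈ As, A.top ≠ s ∧ A.top ≠ t ∧ A.top ≠ v ∧ A.top ≠ w := fun A hA => by
    have := fun m hm => PF.top_ne_of_not_occurs (hfresh A hA m hm)
    exact ⟨this s (by simp), this t (by simp), this v (by simp), this w (by simp)⟩
  have hhead : PDer (curryR (.var s) (Elist (sentinel t v w) As) ::
      (Blist (sentinel t v w) As u F ++ Pi ++ Clist (sentinel t v w) As u G)) (.var s) := by
    simpa using (h.of_curryL (Γ := _ :: _)).of_curryR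
  obtain ⟨Ps, hPs, hflat⟩ := hhead.exists_forall₂_of_curryR fun f hf => by
    rcases top_of_mem_isU_context hAtop htop hf with hf | ⟨hf, -⟩
    · exact hf.1
    · exact hf ▸ hws
  exact exists_pder_of_forall₂_Elist
    (fun _ hQ => sentinelSegment_of_subset_isU_context htv htw hvw hAtop htop hQ) hPi
    (fun f hf => (htop f hf).2.2.2) (fun _ => ne_rdiv_of_mem_Blist fun A hA => (hAtop A hA).2.2.2)
    (fun _ => ne_ldiv_of_mem_Clist fun A hA => (hAtop A hA).2.2.2) (List.suffix_refl _) hPs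
    hflat.symm

/-- In the is(U) construction, if Π is nonempty, none of its formulas has top
s, t, v or w, and Π → is(U) is derivable, then B₂, Π, C₁ → A_j is derivable for
some A_j ∈ U, some suffix B₂ of B and some prefix C₁ of C. -/
theorem isU_backward
    (As : List PF) (hAs : As ≠ [])
    (u t v w s : ℕ) (hvars : ([u, t, v, w, s] : List ℕ).Nodup)
    (hfresh : ∀ A ∈ As, ∀ m ∈ ([u, t, v, w, s] : List ℕ), ¬ A.occurs m)
    (F G : PF)
    (hF : ∀ i < As.length, PDer (Elist (sentinel t v w) (As.drop i)) F)
    (hG : ∀ i < As.length, PDer (Elist (sentinel t v w) (As.take (i + 1))) G)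
    (Pi : List PF) (hPi : Pi ≠ [])
    (htop : ∀ A ∈ Pi, A.top ≠ s ∧ A.top ≠ t ∧ A.top ≠ v ∧ A.top ≠ w)
    (h : PDer Pi (isU As u t v w s F G)) :
    ∃ Aj ∈ As, ∃ B₂ C₁ : List PF,
      B₂ <:+ Blist (sentinel t v w) As u F ∧
      C₁ <+: Clist (sentinel t v w) As u G ∧
      PDer (B₂ ++ Pi ++ C₁) Aj :=
  isU_backward_general As u t v w s hvars hfresh F G Pi hPi htop h
end

section
/- Reduction of the totality problem to the alternation problem: let T be a type with exactly two distinct elements a₁ and a₂, and let G be a context-free grammar over T with start symbol S. Let G′ be the grammar obtained from G by adding a fresh nonterminal S′, taken as the new start symbol, with the two production rules S′ ⇒ a₁ S a₂ and S′ ⇒ a₁ a₂. Then the language of G′ contains every word of the form a₁ w a₂ (for every word w over T) if and only if the language of G contains every nonempty word over T. -/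
open Symbol in
/-- The grammar G′ obtained from G by adding a fresh nonterminal S′ (the new start
symbol) with the production rules S′ ⇒ a₁ S a₂ and S′ ⇒ a₁ a₂. -/
noncomputable def extendGrammar {T : Type} (G : ContextFreeGrammar T) (a₁ a₂ : T) :
    ContextFreeGrammar T :=
  haveI : DecidableEq (ContextFreeRule T (Option G.NT)) := Classical.decEq _
  { NT := Option G.NT
    initial := none
    rules :=
      insert
        ⟨none, [Symbol.terminal a₁, Symbol.nonterminal (some G.initial), Symbol.terminal a₂]⟩
        (insert
          (⟨none, [Symbol.terminal a₁, Symbol.terminal a₂]⟩ : ContextFreeRule T (Option G.NT))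
          (G.rules.image fun r =>
            ⟨some r.input, r.output.map fun x =>
              match x with
              | Symbol.terminal t => Symbol.terminal t
              | Symbol.nonterminal n => Symbol.nonterminal (some n)⟩)) }

/-!
Every derivation in G′ starts with one of the two new rules, after which the outer terminals
a₁, a₂ are never touched. Relabelling nonterminals along the injection `some` turns
G-derivations into G′-derivations, and conversely every G′-derivation from a relabelled string
is relabelled, since the only rules of G′ on nonterminals `some n` are the images of rules of G.
Hence L(G′) = {a₁a₂} ∪ a₁ L(G) a₂, so a₁ w a₂ ∈ L(G′) holds for w = ε and, for w ≠ ε,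
exactly when w ∈ L(G).
-/

open Function

namespace Symbol

variable {T N N' : Type*}

def mapNonterminal (f : N → N') : Symbol T N → Symbol T N'
  | terminal t => terminal t
  | nonterminal n => nonterminal (f n)

@[simp] lemma mapNonterminal_terminal (f : N → N') (t : T) :
    (terminal t : Symbol T N).mapNonterminal f = terminal t := rfl

@[simp] lemma mapNonterminal_nonterminal (f : N → N') (n : N) :
    (nonterminal n : Symbol T N).mapNonterminal f = nonterminal (f n) := rfl

lemma mapNonterminal_eq_terminal_iff {f : N → N'} {s : Symbol T N} {t : T} :
    s.mapNonterminal f = terminal t ↔ s = terminal t := by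
  cases s <;> simp

lemma mapNonterminal_injective {f : N → N'} (hf : Injective f) :
    Injective (mapNonterminal f : Symbol T N → Symbol T N') := by
  rintro (s | s) (t | t) h <;> simp_all [hf.eq_iff]

lemma map_mapNonterminal_eq_map_terminal_iff {f : N → N'} {u : List (Symbol T N)} {x : List T} :
    u.map (mapNonterminal f) = x.map terminal ↔ u = x.map terminal := by
  induction u generalizing x with
  | nil => cases x <;> simp
  | cons s u ih => cases x <;> simp [mapNonterminal_eq_terminal_iff, ih]

end Symbol

open Symbol

namespace ContextFreeRule

variable {T N N' : Type*}

def mapNonterminal (f : N → N') (r : ContextFreeRule T N) : ContextFreeRule T N' :=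
  ⟨f r.input, r.output.map (Symbol.mapNonterminal f)⟩

lemma rewrites_singleton_iff {r : ContextFreeRule T N} {n : N} {v : List (Symbol T N)} :
    r.Rewrites [nonterminal n] v ↔ r.input = n ∧ v = r.output := by
  refine ⟨fun h => ?_, ?_⟩
  · cases h with
    | head => simp
    | cons _ h => cases h
  · rintro ⟨rfl, rfl⟩
    exact Rewrites.input_output

lemma Rewrites.mapNonterminal {r : ContextFreeRule T N} {u v : List (Symbol T N)}
    (h : r.Rewrites u v) (f : N → N') :
    (r.mapNonterminal f).Rewrites
      (u.map (Symbol.mapNonterminal f)) (v.map (Symbol.mapNonterminal f)) := by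
  induction h with
  | head s => rw [List.map_append]; exact Rewrites.head _
  | cons x _ ih => exact ih.cons _

lemma Rewrites.exists_of_mapNonterminal {r : ContextFreeRule T N} {f : N → N'} (hf : Injective f)
    {u : List (Symbol T N)} {v' : List (Symbol T N')}
    (h : (r.mapNonterminal f).Rewrites (u.map (Symbol.mapNonterminal f)) v') :
    ∃ v, v' = v.map (Symbol.mapNonterminal f) ∧ r.Rewrites u v := by
  induction u generalizing v' with
  | nil => cases h
  | cons x u ih =>
    generalize hu : (x :: u).map (Symbol.mapNonterminal f) = u' at h
    cases h with
    | head s =>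
      obtain ⟨hx, rfl⟩ := List.cons.inj hu
      obtain rfl : x = nonterminal r.input := mapNonterminal_injective hf hx
      exact ⟨r.output ++ u, by simp [ContextFreeRule.mapNonterminal], Rewrites.head u⟩
    | cons y h =>
      obtain ⟨rfl, rfl⟩ := List.cons.inj hu
      obtain ⟨v, rfl, hv⟩ := ih h
      exact ⟨x :: v, rfl, hv.cons x⟩

lemma Rewrites.cons_terminal {r : ContextFreeRule T N} {a : T} {u v : List (Symbol T N)}
    (h : r.Rewrites (terminal a :: u) v) : ∃ v', v = terminal a :: v' ∧ r.Rewrites u v' := by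
  cases h with
  | cons _ h => exact ⟨_, rfl, h⟩

lemma Rewrites.append_terminal {r : ContextFreeRule T N} {a : T} {u v : List (Symbol T N)}
    (h : r.Rewrites (u ++ [terminal a]) v) : ∃ v', v = v' ++ [terminal a] ∧ r.Rewrites u v' := by
  induction u generalizing v with
  | nil =>
    cases h with
    | cons _ h => cases h
  | cons x u ih =>
    cases h with
    | head => exact ⟨r.output ++ u, by simp, .head u⟩
    | cons _ h =>
      obtain ⟨v', rfl, hv'⟩ := ih h
      exact ⟨x :: v', rfl, hv'.cons x⟩

end ContextFreeRule

namespace ContextFreeGrammar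

variable {T : Type*}

lemma produces_singleton_iff {g : ContextFreeGrammar T} {n : g.NT} {v : List (Symbol T g.NT)} :
    g.Produces [nonterminal n] v ↔ ∃ r ∈ g.rules, r.input = n ∧ v = r.output := by
  simp only [Produces, ContextFreeRule.rewrites_singleton_iff]

lemma Derives.eq_of_map_terminal {g : ContextFreeGrammar T} {x : List T}
    {v : List (Symbol T g.NT)} (h : g.Derives (x.map terminal) v) : v = x.map terminal := by
  rcases h.eq_or_head with rfl | ⟨_, ⟨r, -, hr⟩, -⟩
  · rfl
  · simpa using hr.nonterminal_input_mem

lemma Derives.cons_terminal {g : ContextFreeGrammar T} {a : T} {u v : List (Symbol T g.NT)}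
    (h : g.Derives (terminal a :: u) v) : ∃ v', v = terminal a :: v' ∧ g.Derives u v' := by
  induction h with
  | refl => exact ⟨u, rfl, .refl u⟩
  | tail _ hstep ih =>
    obtain ⟨v', rfl, hv'⟩ := ih
    obtain ⟨r, hr, hrw⟩ := hstep
    obtain ⟨w, rfl, hw⟩ := hrw.cons_terminal
    exact ⟨w, rfl, hv'.trans_produces ⟨r, hr, hw⟩⟩

lemma Derives.append_terminal {g : ContextFreeGrammar T} {a : T} {u v : List (Symbol T g.NT)}
    (h : g.Derives (u ++ [terminal a]) v) : ∃ v', v = v' ++ [terminal a] ∧ g.Derives u v' := by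
  induction h with
  | refl => exact ⟨u, rfl, .refl u⟩
  | tail _ hstep ih =>
    obtain ⟨v', rfl, hv'⟩ := ih
    obtain ⟨r, hr, hrw⟩ := hstep
    obtain ⟨w, rfl, hw⟩ := hrw.append_terminal
    exact ⟨w, rfl, hv'.trans_produces ⟨r, hr, hw⟩⟩

lemma Derives.exists_of_terminal_cons_append_terminal {g : ContextFreeGrammar T} {a b : T}
    {u : List (Symbol T g.NT)} {w : List T}
    (h : g.Derives (terminal a :: (u ++ [terminal b])) (w.map terminal)) :
    ∃ v, w = a :: (v ++ [b]) ∧ g.Derives u (v.map terminal) := by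
  obtain ⟨_, hw, h₁⟩ := h.cons_terminal
  obtain ⟨v', rfl, h₂⟩ := h₁.append_terminal
  obtain ⟨_, w', rfl, ha, hw'⟩ := List.map_eq_cons_iff.1 hw
  obtain ⟨v, l, rfl, rfl, hl⟩ := List.map_eq_append_iff.1 hw'
  obtain ⟨_, rfl, hb⟩ := List.map_eq_singleton_iff.1 hl
  cases ha
  cases hb
  exact ⟨v, rfl, h₂⟩

section mapNonterminal

variable {g g' : ContextFreeGrammar T} {f : g.NT → g'.NT} {u v : List (Symbol T g.NT)}

lemma Produces.mapNonterminal (hf : ∀ r ∈ g.rules, r.mapNonterminal f ∈ g'.rules)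
    (h : g.Produces u v) :
    g'.Produces (u.map (Symbol.mapNonterminal f)) (v.map (Symbol.mapNonterminal f)) :=
  let ⟨r, hr, hrw⟩ := h
  ⟨_, hf r hr, hrw.mapNonterminal f⟩

lemma Derives.mapNonterminal (hf : ∀ r ∈ g.rules, r.mapNonterminal f ∈ g'.rules)
    (h : g.Derives u v) :
    g'.Derives (u.map (Symbol.mapNonterminal f)) (v.map (Symbol.mapNonterminal f)) := by
  induction h with
  | refl => rfl
  | tail _ hstep ih => exact ih.trans_produces (hstep.mapNonterminal hf)

lemma Produces.exists_of_mapNonterminal (hf : Injective f)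
    (hg' : ∀ r' ∈ g'.rules, ∀ n, r'.input = f n → ∃ r ∈ g.rules, r.mapNonterminal f = r')
    {v' : List (Symbol T g'.NT)}
    (h : g'.Produces (u.map (Symbol.mapNonterminal f)) v') :
    ∃ v, v' = v.map (Symbol.mapNonterminal f) ∧ g.Produces u v := by
  obtain ⟨r', hr', hrw⟩ := h
  obtain ⟨s, -, hs⟩ := List.mem_map.1 hrw.nonterminal_input_mem
  obtain ⟨n, rfl⟩ : ∃ n, s = nonterminal n := by
    cases s with
    | terminal => cases hs
    | nonterminal n => exact ⟨n, rfl⟩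
  obtain ⟨r, hr, rfl⟩ := hg' r' hr' n (nonterminal.inj hs).symm
  obtain ⟨v, rfl, hv⟩ := hrw.exists_of_mapNonterminal hf
  exact ⟨v, rfl, r, hr, hv⟩

lemma Derives.exists_of_mapNonterminal (hf : Injective f)
    (hg' : ∀ r' ∈ g'.rules, ∀ n, r'.input = f n → ∃ r ∈ g.rules, r.mapNonterminal f = r')
    {v' : List (Symbol T g'.NT)}
    (h : g'.Derives (u.map (Symbol.mapNonterminal f)) v') :
    ∃ v, v' = v.map (Symbol.mapNonterminal f) ∧ g.Derives u v := by
  induction h with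
  | refl => exact ⟨u, rfl, .refl u⟩
  | tail _ hstep ih =>
    obtain ⟨v, rfl, hv⟩ := ih
    obtain ⟨w, rfl, hw⟩ := hstep.exists_of_mapNonterminal hf hg'
    exact ⟨w, rfl, hv.trans_produces hw⟩

end mapNonterminal

end ContextFreeGrammar

open ContextFreeGrammar

section extendGrammar

variable {T : Type} {G : ContextFreeGrammar T} {a₁ a₂ : T}

lemma mem_extendGrammar_rules {r : ContextFreeRule T (Option G.NT)} :
    r ∈ (extendGrammar G a₁ a₂).rules ↔
      r = ⟨none, [terminal a₁, nonterminal (some G.initial), terminal a₂]⟩ ∨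
      r = ⟨none, [terminal a₁, terminal a₂]⟩ ∨
      ∃ r₀ ∈ G.rules, r₀.mapNonterminal some = r := by
  delta extendGrammar
  simp only [Finset.mem_insert, Finset.mem_image]
  congr! with r₀
  refine List.map_congr_left fun s _ => ?_
  cases s <;> rfl

lemma mapNonterminal_some_mem_extendGrammar_rules {r : ContextFreeRule T G.NT}
    (hr : r ∈ G.rules) :
    r.mapNonterminal some ∈ (extendGrammar G a₁ a₂).rules :=
  mem_extendGrammar_rules.2 (.inr (.inr ⟨r, hr, rfl⟩))

lemma exists_mapNonterminal_some_eq_of_mem_extendGrammar_rules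
    {r : ContextFreeRule T (Option G.NT)} (hr : r ∈ (extendGrammar G a₁ a₂).rules) {n : G.NT}
    (hn : r.input = some n) : ∃ r₀ ∈ G.rules, r₀.mapNonterminal some = r := by
  rcases mem_extendGrammar_rules.1 hr with rfl | rfl | h
  · cases hn
  · cases hn
  · exact h

lemma cons_append_mem_extendGrammar_language {v : List T} (hv : v ∈ G.language) :
    a₁ :: (v ++ [a₂]) ∈ (extendGrammar G a₁ a₂).language := by
  have hstep : (extendGrammar G a₁ a₂).Produces [nonterminal none]
      [terminal a₁, nonterminal (some G.initial), terminal a₂] :=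
    ⟨_, mem_extendGrammar_rules.2 (.inl rfl), .input_output⟩
  have hmid := hv.mapNonterminal (g' := extendGrammar G a₁ a₂) (f := some)
    fun _ => mapNonterminal_some_mem_extendGrammar_rules
  rw [List.map_map] at hmid
  rw [mem_language_iff, List.map_cons, List.map_append]
  exact hstep.trans_derives ((hmid.append_left [terminal a₁]).append_right [terminal a₂])

lemma eq_pair_or_exists_of_mem_extendGrammar_language {w : List T}
    (hw : w ∈ (extendGrammar G a₁ a₂).language) :
    w = [a₁, a₂] ∨ ∃ v ∈ G.language, w = a₁ :: (v ++ [a₂]) := by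
  obtain ⟨_, hstep, hrest⟩ : ∃ v, (extendGrammar G a₁ a₂).Produces [nonterminal none] v ∧
      (extendGrammar G a₁ a₂).Derives v (w.map terminal) := by
    rcases hw.eq_or_head with h | h
    · cases w <;> simp at h
    · exact h
  obtain ⟨r, hr, hin, rfl⟩ := produces_singleton_iff.1 hstep
  rcases mem_extendGrammar_rules.1 hr with rfl | rfl | ⟨r₀, -, rfl⟩
  · obtain ⟨v, hlift, hG⟩ := hrest.exists_of_mapNonterminal
      (u := [terminal a₁, nonterminal G.initial, terminal a₂]) (Option.some_injective _)
      fun _ hr _ hn => exists_mapNonterminal_some_eq_of_mem_extendGrammar_rules hr hn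
    obtain rfl := map_mapNonterminal_eq_map_terminal_iff.1 hlift.symm
    obtain ⟨v, rfl, hv⟩ :=
      hG.exists_of_terminal_cons_append_terminal (u := [nonterminal G.initial])
    exact .inr ⟨v, hv, rfl⟩
  · exact .inl (List.map_injective_iff.2 (fun _ _ => terminal.inj) hrest.eq_of_map_terminal)
  · cases hin

theorem mem_extendGrammar_language_iff {w : List T} :
    w ∈ (extendGrammar G a₁ a₂).language ↔
      w = [a₁, a₂] ∨ ∃ v ∈ G.language, w = a₁ :: (v ++ [a₂]) := by
  refine ⟨eq_pair_or_exists_of_mem_extendGrammar_language, ?_⟩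
  rintro (rfl | ⟨v, hv, rfl⟩)
  · exact Produces.single ⟨_, mem_extendGrammar_rules.2 (.inr (.inl rfl)), .input_output⟩
  · exact cons_append_mem_extendGrammar_language hv

end extendGrammar

theorem extendGrammar_alternation_iff_total_general {T : Type} (a₁ a₂ : T) (G : ContextFreeGrammar T) :
    (∀ w : List T, a₁ :: (w ++ [a₂]) ∈ (extendGrammar G a₁ a₂).language) ↔
      (∀ w : List T, w ≠ [] → w ∈ G.language) := by
  simp only [mem_extendGrammar_language_iff]
  refine ⟨fun h w hw => ?_, fun h w => ?_⟩
  · rcases h w with hpair | ⟨v, hv, heq⟩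
    · exact absurd (by simpa using hpair) hw
    · obtain rfl : w = v := by simpa using heq
      exact hv
  · rcases eq_or_ne w [] with rfl | hw
    · exact .inl rfl
    · exact .inr ⟨w, h w hw, rfl⟩

/-- Reduction of the totality problem to the alternation problem: over an alphabet with
exactly two distinct elements a₁ and a₂, the language of G′ contains every word of the
form a₁ w a₂ iff the language of G contains every nonempty word. -/
theorem extendGrammar_alternation_iff_total {T : Type} (a₁ a₂ : T)
    (hne : a₁ ≠ a₂) (hall : ∀ t : T, t = a₁ ∨ t = a₂) (G : ContextFreeGrammar T) :
    (∀ w : List T, a₁ :: (w ++ [a₂]) ∈ (extendGrammar G a₁ a₂).language) ↔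
      (∀ w : List T, w ≠ [] → w ∈ G.language) :=
  extendGrammar_alternation_iff_total_general a₁ a₂ G
end

section
/- Completeness for the *-external fragment with respect to language models: a *-external sequent is derivable in L*ω if and only if it is true in every L-model, i.e., for every type Σ and every valuation of the variables by formal languages over Σ. -/
/-- A formula is product-free if it is built from variables using only \\ and /. -/
def ProdFree : LFormula → Prop
  | LFormula.var _ => True
  | LFormula.ldiv A B => ProdFree A ∧ ProdFree B
  | LFormula.rdiv B A => ProdFree B ∧ ProdFree A
  | LFormula.mul _ _ => False
  | LFormula.star _ => False

/-- A formula is *-external if no · or * occurs in it within the scope of \\ or /. -/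
inductive StarExt : LFormula → Prop
  | pf {A : LFormula} : ProdFree A → StarExt A
  | mul {A B : LFormula} : StarExt A → StarExt B → StarExt (LFormula.mul A B)
  | star {A : LFormula} : StarExt A → StarExt (LFormula.star A)

/-- Interpretation of L*ω formulas in a language model: a valuation `w` of the
variables by formal languages over Σ extends to all formulas, divisions being
interpreted by the residuals of concatenation and * by the Kleene star. -/
def LEval {σ : Type} (w : ℕ → Language σ) : LFormula → Language σ
  | LFormula.var n => w n
  | LFormula.ldiv A B => {u | ∀ x ∈ LEval w A, x ++ u ∈ LEval w B}
  | LFormula.rdiv B A => {u | ∀ x ∈ LEval w A, u ++ x ∈ LEval w B}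
  | LFormula.mul A B => LEval w A * LEval w B
  | LFormula.star A => KStar.kstar (LEval w A)

/-!
Soundness is a routine induction on derivations: `\` and `/` are the residuals of concatenation
and `A*` is the union of the powers of `A`.

For completeness, take the canonical model over the alphabet of formulas, in which `p n` denotes
the set of antecedents deriving `p n`. For product-free `C`, the word `[C]` lies in `w(C)` and
every word of `w(C)` derives `C`. This needs no cut: each `w(C)` is closed under replacing a letter
`B` by `Π, A\B` or `B/A, Π` whenever `Π → A` is derivable, which gives `Π, A\B ∈ w(B)` from
`[B] ∈ w(B)`. A *-external `A` has a language of product-free unfoldings (`·` and `*` read as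
product and star of languages) contained in `w(A)`. So if `Γ → B` is true in the canonical model,
every unfolding of `Γ` derives `B`, and the rules (·→) and (*→)_ω reassemble these derivations
into one of `Γ → B`.
-/

section Soundness

variable {σ : Type} (w : ℕ → Language σ)

theorem lEval_mul_ldiv_le (A B : LFormula) : LEval w A * LEval w (.ldiv A B) ≤ LEval w B := by
  intro v hv
  obtain ⟨x, hx, u, hu, rfl⟩ := Language.mem_mul.mp hv
  exact hu x hx

theorem lEval_rdiv_mul_le (A B : LFormula) : LEval w (.rdiv B A) * LEval w A ≤ LEval w B := by
  intro v hv
  obtain ⟨u, hu, x, hx, rfl⟩ := Language.mem_mul.mp hv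
  exact hu x hx

theorem le_lEval_ldiv {A B : LFormula} {X : Language σ} (h : LEval w A * X ≤ LEval w B) :
    X ≤ LEval w (.ldiv A B) :=
  fun _ hu _ hx => h (Language.append_mem_mul hx hu)

theorem le_lEval_rdiv {A B : LFormula} {X : Language σ} (h : X * LEval w A ≤ LEval w B) :
    X ≤ LEval w (.rdiv B A) :=
  fun _ hu _ hx => h (Language.append_mem_mul hu hx)

theorem LDer.sound {Γ : List LFormula} {B : LFormula} (h : LDer Γ B) :
    (Γ.map (LEval w)).prod ≤ LEval w B := by
  induction h with
  | id A => simp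
  | ldiv_left P Γ Δ A B C _ _ ihP ihB =>
    have hP := (mul_le_mul' ihP le_rfl).trans (lEval_mul_ldiv_le w A B)
    simpa [mul_assoc] using
      (mul_le_mul' (mul_le_mul' le_rfl hP) le_rfl).trans (by simpa [mul_assoc] using ihB)
  | ldiv_right P A B _ ih => exact le_lEval_ldiv w (by simpa using ih)
  | rdiv_left P Γ Δ A B C _ _ ihP ihB =>
    have hP := (mul_le_mul' le_rfl ihP).trans (lEval_rdiv_mul_le w A B)
    simpa [mul_assoc] using
      (mul_le_mul' (mul_le_mul' le_rfl hP) le_rfl).trans (by simpa [mul_assoc] using ihB)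
  | rdiv_right P A B _ ih => exact le_lEval_rdiv w (by simpa using ih)
  | mul_left Γ Δ A B C _ ih => simpa [LEval, mul_assoc] using ih
  | mul_right Γ Δ A B _ _ ihΓ ihΔ => simpa [LEval] using mul_le_mul' ihΓ ihΔ
  | star_left Γ Δ A C _ ih =>
    simp only [List.map_append, List.prod_append, List.map_replicate, List.prod_replicate] at ih
    simpa [LEval, mul_assoc, Language.kstar_eq_iSup_pow, Language.mul_iSup, Language.iSup_mul]
      using ih
  | star_right Ps A _ ih =>
    rw [List.map_flatten, List.prod_flatten, LEval]
    refine (List.prod_le_pow_card _ _ ?_).trans pow_le_kstar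
    simpa using ih

end Soundness

def canonicalVal : ℕ → Language LFormula := fun n => {Γ | LDer Γ (.var n)}

theorem mem_lEval_canonicalVal_of_replace {B : LFormula} {Θ : List LFormula}
    (hB : ∀ Γ Δ n, LDer (Γ ++ B :: Δ) (.var n) → LDer (Γ ++ Θ ++ Δ) (.var n)) {C : LFormula}
    (hC : ProdFree C) {Γ Δ : List LFormula} (h : Γ ++ B :: Δ ∈ LEval canonicalVal C) :
    Γ ++ Θ ++ Δ ∈ LEval canonicalVal C := by
  induction C generalizing Γ Δ with
  | var n => exact hB Γ Δ n h
  | ldiv C₁ C₂ _ ih =>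
    intro x hx
    simpa using ih hC.2 (Γ := x ++ Γ) (by simpa using h x hx)
  | rdiv C₂ C₁ ih _ =>
    intro x hx
    simpa using ih hC.1 (Δ := Δ ++ x) (by simpa using h x hx)
  | mul _ _ _ _ => exact hC.elim
  | star _ _ => exact hC.elim

theorem ProdFree.canonical_truth {C : LFormula} (hC : ProdFree C) :
    [C] ∈ LEval canonicalVal C ∧ ∀ u ∈ LEval canonicalVal C, LDer u C := by
  induction C with
  | var n => exact ⟨LDer.id _, fun _ h => h⟩
  | ldiv A B ihA ihB =>
    obtain ⟨idA, derA⟩ := ihA hC.1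
    obtain ⟨idB, derB⟩ := ihB hC.2
    refine ⟨fun x hx => ?_, fun u hu => LDer.ldiv_right u A B (derB _ (hu [A] idA))⟩
    have hB : ∀ Γ Δ n, LDer (Γ ++ B :: Δ) (.var n) →
        LDer (Γ ++ (x ++ [.ldiv A B]) ++ Δ) (.var n) :=
      fun Γ Δ n h => by simpa using LDer.ldiv_left x Γ Δ A B _ (derA x hx) (by simpa using h)
    simpa using mem_lEval_canonicalVal_of_replace hB hC.2 (Γ := []) (Δ := []) idB
  | rdiv B A ihB ihA =>
    obtain ⟨idA, derA⟩ := ihA hC.2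
    obtain ⟨idB, derB⟩ := ihB hC.1
    refine ⟨fun x hx => ?_, fun u hu => LDer.rdiv_right u A B (derB _ (hu [A] idA))⟩
    have hB : ∀ Γ Δ n, LDer (Γ ++ B :: Δ) (.var n) →
        LDer (Γ ++ (.rdiv B A :: x) ++ Δ) (.var n) :=
      fun Γ Δ n h => by simpa using LDer.rdiv_left x Γ Δ A B _ (derA x hx) (by simpa using h)
    simpa using mem_lEval_canonicalVal_of_replace hB hC.1 (Γ := []) (Δ := []) idB
  | mul _ _ _ _ => exact hC.elim
  | star _ _ => exact hC.elim

open scoped Computability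

/-- The product-free antecedents into which the rules (·→) and (*→)_ω decompose a formula. -/
def LFormula.unfoldings : LFormula → Language LFormula
  | .mul A B => A.unfoldings * B.unfoldings
  | .star A => A.unfoldings∗
  | .var n => {[.var n]}
  | .ldiv A B => {[.ldiv A B]}
  | .rdiv B A => {[.rdiv B A]}

theorem ProdFree.unfoldings_eq {A : LFormula} (hA : ProdFree A) : A.unfoldings = {[A]} := by
  cases A <;> first | rfl | exact hA.elim

theorem StarExt.unfoldings_le {A : LFormula} (hA : StarExt A) :
    A.unfoldings ≤ LEval canonicalVal A := by
  induction hA with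
  | pf hA => rw [hA.unfoldings_eq]; exact Set.singleton_subset_iff.mpr hA.canonical_truth.1
  | mul _ _ ihA ihB => exact mul_le_mul' ihA ihB
  | star _ ih => exact kstar_mono ih

def UnfoldingAdmissible (A : LFormula) : Prop :=
  ∀ Φ Ψ C, (∀ u ∈ A.unfoldings, LDer (Φ ++ u ++ Ψ) C) → LDer (Φ ++ A :: Ψ) C

theorem LDer.of_forall_mem_prod_unfoldings {Γ : List LFormula}
    (hΓ : ∀ A ∈ Γ, UnfoldingAdmissible A) {Φ Ψ : List LFormula} {C : LFormula}
    (h : ∀ u ∈ (Γ.map LFormula.unfoldings).prod, LDer (Φ ++ u ++ Ψ) C) :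
    LDer (Φ ++ Γ ++ Ψ) C := by
  induction Γ generalizing Φ with
  | nil => simpa using h [] rfl
  | cons A Γ ih =>
    rw [List.append_assoc, List.cons_append]
    refine hΓ A (by simp) Φ (Γ ++ Ψ) C fun x hx => ?_
    simpa using ih (fun B hB => hΓ B (by simp [hB])) (Φ := Φ ++ x)
      fun y hy => by simpa using h (x ++ y) (Language.append_mem_mul hx hy)

theorem StarExt.unfoldingAdmissible {A : LFormula} (hA : StarExt A) : UnfoldingAdmissible A := by
  induction hA with
  | @pf A hA =>
    intro Φ Ψ C h
    simpa using h [A] (by rw [hA.unfoldings_eq]; rfl)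
  | @mul A B _ _ ihA ihB =>
    intro Φ Ψ C h
    simpa using LDer.mul_left Φ Ψ A B C <| LDer.of_forall_mem_prod_unfoldings
      (Γ := [A, B]) (by simp [ihA, ihB]) fun u hu => h u (by simpa [LFormula.unfoldings] using hu)
  | @star A _ ih =>
    intro Φ Ψ C h
    simpa using LDer.star_left Φ Ψ A C fun n => LDer.of_forall_mem_prod_unfoldings
      (fun B hB => List.eq_of_mem_replicate hB ▸ ih) fun u hu => by
        rw [List.map_replicate, List.prod_replicate] at hu
        exact h u (pow_le_kstar (a := A.unfoldings) hu)

/-- Completeness of the *-external fragment of L*ω w.r.t. language models: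
a *-external sequent is derivable in L*ω iff it is true in every L-model, i.e.
w(A₁)·…·w(A_n) ⊆ w(B) for every type Σ and every valuation w of the variables
by languages over Σ (for the empty antecedent: the empty word belongs to w(B)). -/
theorem star_external_Lmodel_completeness (Γ : List LFormula) (B : LFormula)
    (hΓ : ∀ A ∈ Γ, StarExt A) (hB : ProdFree B) :
    LDer Γ B ↔ ∀ (σ : Type) (w : ℕ → Language σ),
      (Γ.map (LEval w)).prod ≤ LEval w B := by
  refine ⟨fun h σ w => h.sound w, fun h => ?_⟩
  have hunfold : (Γ.map LFormula.unfoldings).prod ≤ (Γ.map (LEval canonicalVal)).prod :=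
    List.prod_le_prod' fun A hA => (hΓ A hA).unfoldings_le
  simpa using LDer.of_forall_mem_prod_unfoldings (Φ := []) (Ψ := [])
    (fun A hA => (hΓ A hA).unfoldingAdmissible)
    fun u hu => by simpa using hB.canonical_truth.2 u (h _ canonicalVal (hunfold hu))
end
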